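/- arXiv:2404.19041 — 10 statements merged into one kernel-verified Lean document; each statement's English description precedes it below -/
import Mathlib

section
/- There exists a unique pair (x*, y*) with x* > 0 and y* > 0 such that F(x*, y*) = (0, 0). Moreover, y* is the unique positive solution of (2a−1)p(y) = μ, and x* = ν·y* / (2(1−a)·p(y*)). -/
/-- Model 1 (regulated division): the FLLN vector field
`F(x, y) = ((2a−1)p(y)x − μx, 2(1−a)p(y)x − νy)` has a unique zero `(x*, y*)` with
`x* > 0`, `y* > 0`; moreover `y*` is the unique positive solution of `(2a−1)p(y) = μ`
and `x* = ν y* / (2(1−a) p(y*))`. -/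
theorem model1_unique_positive_steady_state
    (a μ ν : ℝ) (p : ℝ → ℝ)
    (ha : 1 / 2 < a) (ha1 : a < 1) (hμ : 0 < μ) (hν : 0 < ν)
    (hp : ContDiff ℝ 2 p)
    (hppos : ∀ y : ℝ, 0 ≤ y → 0 < p y)
    (hpdec : ∀ y : ℝ, 0 ≤ y → deriv p y < 0)
    (hp0 : μ < (2 * a - 1) * p 0)
    (hplim : Filter.Tendsto p Filter.atTop (nhds 0))
    (F : ℝ × ℝ → ℝ × ℝ)
    (hF : ∀ x y : ℝ, F (x, y) = ((2 * a - 1) * p y * x - μ * x,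
      2 * (1 - a) * p y * x - ν * y)) :
    (∃! z : ℝ × ℝ, 0 < z.1 ∧ 0 < z.2 ∧ F z = (0, 0)) ∧
    ∀ z : ℝ × ℝ, 0 < z.1 → 0 < z.2 → F z = (0, 0) →
      (∀ y : ℝ, 0 < y → ((2 * a - 1) * p y = μ ↔ y = z.2)) ∧
      z.1 = ν * z.2 / (2 * (1 - a) * p z.2) := by
  have hc : (0:ℝ) < 2 * a - 1 := by linarith
  have hb : (0:ℝ) < 2 * (1 - a) := by linarith
  have hcont : Continuous p := hp.continuous
  -- p is strictly decreasing on [0,∞)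
  have hanti : StrictAntiOn p (Set.Ici (0:ℝ)) := by
    apply strictAntiOn_of_deriv_neg (convex_Ici 0) (hcont.continuousOn)
    intro y hy
    rw [interior_Ici] at hy
    exact hpdec y (le_of_lt hy)
  have hμc : 0 < μ / (2 * a - 1) := div_pos hμ hc
  have hμclt : μ / (2 * a - 1) < p 0 := (div_lt_iff₀' hc).mpr hp0
  -- find Y with p Y < μ/(2a-1)
  obtain ⟨Y, hY0, hYlt⟩ : ∃ Y : ℝ, 0 ≤ Y ∧ p Y < μ / (2 * a - 1) := by
    have h1 : ∀ᶠ y in Filter.atTop, p y < μ / (2 * a - 1) :=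
      hplim.eventually_lt_const hμc
    have h2 : ∀ᶠ y : ℝ in Filter.atTop, 0 ≤ y := Filter.eventually_ge_atTop 0
    obtain ⟨Y, hY2, hY1⟩ := (h2.and h1).exists
    exact ⟨Y, hY2, hY1⟩
  -- intermediate value: ∃ y* ∈ [0, Y], p y* = μ/(2a-1)
  obtain ⟨ys, hysmem, hpys⟩ : ∃ ys ∈ Set.Icc 0 Y, p ys = μ / (2 * a - 1) := by
    have := intermediate_value_Icc' hY0 hcont.continuousOn
      (Set.mem_Icc.mpr ⟨le_of_lt hYlt, le_of_lt hμclt⟩)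
    obtain ⟨ys, h1, h2⟩ := this
    exact ⟨ys, h1, h2⟩
  have hys0 : 0 ≤ ys := hysmem.1
  have hyspos : 0 < ys := by
    rcases lt_or_eq_of_le hys0 with h | h
    · exact h
    · exfalso; rw [← h] at hpys; linarith
  have hpysval : (2 * a - 1) * p ys = μ := by
    rw [hpys]; field_simp
  have hpyspos : 0 < p ys := hppos ys hys0
  -- uniqueness of y solving p y = μ/(2a-1) among nonneg
  have huniq : ∀ y : ℝ, 0 ≤ y → (2 * a - 1) * p y = μ → y = ys := by
    intro y hy hpy
    have : p y = p ys := by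
      have : p y = μ / (2 * a - 1) := by
        field_simp at hpy ⊢; linarith
      rw [this, hpys]
    exact hanti.injOn hy hys0 this
  set xs := ν * ys / (2 * (1 - a) * p ys) with hxs
  have hdenom : 2 * (1 - a) * p ys ≠ 0 := by positivity
  have hxspos : 0 < xs := by
    apply div_pos (by positivity) (by positivity)
  -- from F z = 0 derive the equations
  have hkey : ∀ z : ℝ × ℝ, 0 < z.1 → 0 < z.2 → F z = (0, 0) →
      z.2 = ys ∧ z.1 = ν * z.2 / (2 * (1 - a) * p z.2) := by
    intro z hx hy hFz
    obtain ⟨x, y⟩ := z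
    simp only at hx hy ⊢
    rw [hF x y, Prod.mk.injEq] at hFz
    obtain ⟨h1, h2⟩ := hFz
    have heq1 : (2 * a - 1) * p y = μ := by
      have : ((2 * a - 1) * p y - μ) * x = 0 := by ring_nf; ring_nf at h1; linarith
      rcases mul_eq_zero.mp this with h | h
      · linarith
      · exact absurd h (ne_of_gt hx)
    have hyys : y = ys := huniq y hy.le heq1
    refine ⟨hyys, ?_⟩
    have hpy : 0 < p y := hppos y hy.le
    have ha' : (1:ℝ) - a ≠ 0 := by linarith
    field_simp
    linarith
  constructor
  · refine ⟨(xs, ys), ⟨hxspos, hyspos, ?_⟩, ?_⟩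
    · rw [hF xs ys, Prod.mk.injEq]
      constructor
      · rw [show (2 * a - 1) * p ys * xs - μ * xs = ((2 * a - 1) * p ys - μ) * xs by ring,
          hpysval]
        ring
      · rw [hxs]
        have ha' : (1:ℝ) - a ≠ 0 := by linarith
        field_simp
        ring
    · intro z ⟨hx, hy, hFz⟩
      obtain ⟨h1, h2⟩ := hkey z hx hy hFz
      have : z.1 = xs := by rw [h2, h1]
      exact Prod.ext this h1
  · intro z hx hy hFz
    obtain ⟨h1, h2⟩ := hkey z hx hy hFz
    refine ⟨?_, h2⟩
    intro y hy0
    constructor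
    · intro heq
      rw [h1]
      exact huniq y hy0.le heq
    · intro heq
      rw [heq, h1]
      exact hpysval
end

section
/- There exists a unique pair (x*, y*) with x* > 0 and y* > 0 such that F(x*, y*) = (0, 0). Moreover, y* is the unique positive solution of (2a(y)−1)p = μ, and x* = ν·y* / (2(1−a(y*))·p). -/
/-! The first component of `F` vanishes at a point with `x > 0` exactly when
`a y = (μ + p) / (2p)`. Since `a` decreases strictly from `a 0 > (μ + p) / (2p)` towards `0`,
the intermediate value theorem gives exactly one such `y > 0`, and the second component then
determines `x`. -/

open Set Filter Topology

theorem existsUnique_eq_of_strictAntiOn_Ici {f : ℝ → ℝ} {b c L : ℝ}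
    (hf : ContinuousOn f (Ici b)) (hanti : StrictAntiOn f (Ici b))
    (hlim : Tendsto f atTop (𝓝 L)) (hLc : L < c) (hcb : c < f b) :
    ∃! y, b < y ∧ f y = c := by
  obtain ⟨Y, hYc, hbY⟩ :=
    ((hlim.eventually_lt_const hLc).and (eventually_ge_atTop b)).exists
  obtain ⟨y, hy, hyc⟩ :=
    intermediate_value_Icc' hbY (hf.mono Icc_subset_Ici_self) ⟨hYc.le, hcb.le⟩
  have hby : b < y := hy.1.lt_of_ne (by rintro rfl; exact hcb.ne' hyc)
  refine ⟨y, ⟨hby, hyc⟩, fun y' ⟨hby', hy'c⟩ => ?_⟩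
  exact hanti.injOn (mem_Ici.2 hby'.le) (mem_Ici.2 hby.le) (hy'c.trans hyc.symm)

theorem self_renewal_balance_iff {p μ A : ℝ} (hp : p ≠ 0) :
    (2 * A - 1) * p = μ ↔ A = (μ + p) / (2 * p) := by
  rw [eq_div_iff (mul_ne_zero two_ne_zero hp)]
  constructor <;> intro h <;> linarith

theorem model2_field_eq_zero_iff {p μ ν A x y : ℝ} (hx : x ≠ 0) (hden : 2 * (1 - A) * p ≠ 0) :
    ((2 * A - 1) * p * x - μ * x, 2 * (1 - A) * p * x - ν * y) = ((0 : ℝ), (0 : ℝ)) ↔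
      (2 * A - 1) * p = μ ∧ x = ν * y / (2 * (1 - A) * p) := by
  rw [Prod.mk.injEq, eq_div_iff hden, ← sub_mul, mul_eq_zero, or_iff_left hx, sub_eq_zero,
    sub_eq_zero, mul_comm x]

theorem model2_unique_positive_steady_state_general
    (p μ ν : ℝ) (a : ℝ → ℝ)
    (hp : 0 < p) (hμ : 0 < μ) (hν : 0 < ν)
    (ha : ContDiff ℝ 2 a)
    (ha01 : ∀ y : ℝ, 0 ≤ y → 0 < a y ∧ a y < 1)
    (hadec : ∀ y : ℝ, 0 ≤ y → deriv a y < 0)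
    (ha0p : μ < (2 * a 0 - 1) * p)
    (halim : Filter.Tendsto a Filter.atTop (nhds 0))
    (F : ℝ × ℝ → ℝ × ℝ)
    (hF : ∀ x y : ℝ, F (x, y) = ((2 * a y - 1) * p * x - μ * x,
      2 * (1 - a y) * p * x - ν * y)) :
    (∃! z : ℝ × ℝ, 0 < z.1 ∧ 0 < z.2 ∧ F z = (0, 0)) ∧
    ∀ z : ℝ × ℝ, 0 < z.1 → 0 < z.2 → F z = (0, 0) →
      (∀ y : ℝ, 0 < y → ((2 * a y - 1) * p = μ ↔ y = z.2)) ∧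
      z.1 = ν * z.2 / (2 * (1 - a z.2) * p) := by
  have hanti : StrictAntiOn a (Ici 0) :=
    strictAntiOn_of_deriv_neg (convex_Ici 0) ha.continuous.continuousOn
      (by simpa using fun y hy => hadec y hy.le)
  have hden : ∀ y, 0 < y → 0 < 2 * (1 - a y) * p := fun y hy => by
    have := (ha01 y hy.le).2
    positivity
  obtain ⟨ys, ⟨hys, hays⟩, hys_unique⟩ :=
    existsUnique_eq_of_strictAntiOn_Ici ha.continuous.continuousOn hanti halim
      (by positivity : (0 : ℝ) < (μ + p) / (2 * p))
      (by rw [div_lt_iff₀ (by positivity)]; linarith)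
  have hbal : ∀ y, 0 < y → ((2 * a y - 1) * p = μ ↔ y = ys) := fun y hy => by
    rw [self_renewal_balance_iff hp.ne']
    exact ⟨fun h => hys_unique y ⟨hy, h⟩, fun h => h ▸ hays⟩
  set xs := ν * ys / (2 * (1 - a ys) * p)
  have hxs : 0 < xs := div_pos (by positivity) (hden ys hys)
  have hzero : ∀ z : ℝ × ℝ, 0 < z.1 → 0 < z.2 → (F z = (0, 0) ↔ z = (xs, ys)) := by
    rintro ⟨x, y⟩ hx hy
    rw [hF, model2_field_eq_zero_iff hx.ne' (hden y hy).ne', hbal y hy, Prod.mk.injEq]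
    constructor <;> rintro ⟨rfl, rfl⟩ <;> exact ⟨rfl, rfl⟩
  refine ⟨⟨(xs, ys), ⟨hxs, hys, (hzero _ hxs hys).2 rfl⟩,
    fun z hz => (hzero z hz.1 hz.2.1).1 hz.2.2⟩, fun z hx hy hFz => ?_⟩
  obtain rfl := (hzero z hx hy).1 hFz
  exact ⟨hbal, rfl⟩

/-- Model 2 (regulated self-renewal): the FLLN vector field
`F(x, y) = ((2a(y)−1)px − μx, 2(1−a(y))px − νy)` has a unique zero `(x*, y*)` with
`x* > 0`, `y* > 0`; moreover `y*` is the unique positive solution of `(2a(y)−1)p = μ`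
and `x* = ν y* / (2(1−a(y*)) p)`. -/
theorem model2_unique_positive_steady_state
    (p μ ν : ℝ) (a : ℝ → ℝ)
    (hp : 0 < p) (hμ : 0 < μ) (hν : 0 < ν)
    (ha : ContDiff ℝ 2 a)
    (ha01 : ∀ y : ℝ, 0 ≤ y → 0 < a y ∧ a y < 1)
    (hadec : ∀ y : ℝ, 0 ≤ y → deriv a y < 0)
    (ha0p : μ < (2 * a 0 - 1) * p)
    (halim : Filter.Tendsto a Filter.atTop (nhds 0))
    (hstab : ∀ y : ℝ, 0 < y → -(deriv a y) * y < 1 - a y)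
    (F : ℝ × ℝ → ℝ × ℝ)
    (hF : ∀ x y : ℝ, F (x, y) = ((2 * a y - 1) * p * x - μ * x,
      2 * (1 - a y) * p * x - ν * y)) :
    (∃! z : ℝ × ℝ, 0 < z.1 ∧ 0 < z.2 ∧ F z = (0, 0)) ∧
    ∀ z : ℝ × ℝ, 0 < z.1 → 0 < z.2 → F z = (0, 0) →
      (∀ y : ℝ, 0 < y → ((2 * a y - 1) * p = μ ↔ y = z.2)) ∧
      z.1 = ν * z.2 / (2 * (1 - a z.2) * p) :=
  model2_unique_positive_steady_state_general p μ ν a hp hμ hν ha ha01 hadec ha0p halim F hF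
end

section
/- Let (x*, y*) be the unique positive steady state of F, i.e. the unique pair with x* > 0, y* > 0 and F(x*, y*) = (0,0). Then the 2×2 Jacobian matrix of F at (x*, y*), namely A* = [[0, (2a−1)p'(y*)x*], [2(1−a)p(y*), 2(1−a)p'(y*)x* − ν]], has negative trace and positive determinant; equivalently, every complex eigenvalue of A* has strictly negative real part. -/
open Matrix

/-- Model 1 (regulated division): at the unique positive steady state `(x*, y*)`, the
Jacobian `A* = [[0, (2a−1)p'(y*)x*], [2(1−a)p(y*), 2(1−a)p'(y*)x* − ν]]` has negative
trace and positive determinant; equivalently, every complex eigenvalue of `A*` has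
strictly negative real part. -/
theorem model1_jacobian_stable
    (a μ ν : ℝ) (p : ℝ → ℝ)
    (ha : 1 / 2 < a) (ha1 : a < 1) (hμ : 0 < μ) (hν : 0 < ν)
    (hp : ContDiff ℝ 2 p)
    (hppos : ∀ y : ℝ, 0 ≤ y → 0 < p y)
    (hpdec : ∀ y : ℝ, 0 ≤ y → deriv p y < 0)
    (hp0 : μ < (2 * a - 1) * p 0)
    (hplim : Filter.Tendsto p Filter.atTop (nhds 0))
    (F : ℝ × ℝ → ℝ × ℝ)
    (hF : ∀ x y : ℝ, F (x, y) = ((2 * a - 1) * p y * x - μ * x,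
      2 * (1 - a) * p y * x - ν * y))
    (xs ys : ℝ) (hxs : 0 < xs) (hys : 0 < ys)
    (hsteady : F (xs, ys) = (0, 0))
    (huniq : ∀ z : ℝ × ℝ, 0 < z.1 → 0 < z.2 → F z = (0, 0) → z = (xs, ys))
    (Astar : Matrix (Fin 2) (Fin 2) ℝ)
    (hA : Astar = !![0, (2 * a - 1) * deriv p ys * xs;
      2 * (1 - a) * p ys, 2 * (1 - a) * deriv p ys * xs - ν]) :
    Astar.trace < 0 ∧ 0 < Astar.det ∧
      ∀ z ∈ spectrum ℂ (Astar.map (Complex.ofReal)), z.re < 0 := by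
  have hpy : 0 < p ys := hppos ys hys.le
  have hdy : deriv p ys < 0 := hpdec ys hys.le
  have ha' : 0 < 2 * (1 - a) := by linarith
  have ha'' : 0 < 2 * a - 1 := by linarith
  have htr : Astar.trace < 0 := by
    rw [hA, Matrix.trace_fin_two_of]
    nlinarith [mul_pos ha' hxs]
  have hdet : 0 < Astar.det := by
    rw [hA, Matrix.det_fin_two_of]
    have key : 0 < (2 * a - 1) * xs * (2 * (1 - a) * p ys) * (-deriv p ys) :=
      mul_pos (mul_pos (mul_pos ha'' hxs) (mul_pos ha' hpy)) (by linarith)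
    nlinarith [key]
  refine ⟨htr, hdet, ?_⟩
  intro z hz
  rw [spectrum.mem_iff] at hz
  set B : ℝ := (2 * a - 1) * deriv p ys * xs with hB
  set C : ℝ := 2 * (1 - a) * p ys with hC
  set D : ℝ := 2 * (1 - a) * deriv p ys * xs - ν with hD
  have hBC : B * C < 0 := by
    have : 0 < (-B) * C := by
      apply mul_pos _ (mul_pos ha' hpy)
      simp only [hB]
      nlinarith [mul_pos ha'' hxs]
    nlinarith
  have hDneg : D < 0 := by rw [hD]; nlinarith [mul_pos ha' hxs]
  -- the determinant of z•1 - M vanishes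
  have hdet0 : (z - 0) * (z - (D : ℂ)) - (B : ℂ) * (C : ℂ) = 0 := by
    by_contra hne
    apply hz
    rw [Algebra.algebraMap_eq_smul_one, Matrix.isUnit_iff_isUnit_det]
    have hdetval : ((z • (1 : Matrix (Fin 2) (Fin 2) ℂ)) - Astar.map Complex.ofReal).det
        = (z - 0) * (z - (D : ℂ)) - (B : ℂ) * (C : ℂ) := by
      rw [Matrix.det_fin_two]
      simp [hA, Matrix.one_apply, Matrix.map_apply]
    rw [hdetval]
    exact isUnit_iff_ne_zero.mpr hne
  have hre := congrArg Complex.re hdet0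
  have him := congrArg Complex.im hdet0
  simp only [Complex.sub_re, Complex.sub_im, Complex.mul_re, Complex.mul_im,
    Complex.ofReal_re, Complex.ofReal_im, Complex.zero_re, Complex.zero_im] at hre him
  set x := z.re
  set y := z.im
  -- hre : (x)*(x - D) - y*y - (B*C - 0) = 0 approx; him : x*y + y*(x - D) = 0
  rcases eq_or_ne y 0 with hy | hy
  · -- real eigenvalue
    rw [hy] at hre
    by_contra hx
    push_neg at hx
    nlinarith [hre, hDneg, hBC]
  · have : 2 * x - D = 0 := by
      have h2 : y * (2 * x - D) = 0 := by nlinarith [him]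
      rcases mul_eq_zero.mp h2 with h | h
      · exact absurd h hy
      · exact h
    have : x = D / 2 := by linarith
    rw [this]
    linarith
end

section
/- Let (x*, y*) be the unique positive steady state of F, i.e. the unique pair with x* > 0, y* > 0 and F(x*, y*) = (0,0). Then the 2×2 Jacobian matrix of F at (x*, y*), namely A* = [[0, 2a'(y*)p·x*], [2(1−a(y*))p, −2a'(y*)p·x* − ν]], has negative trace and positive determinant; equivalently, every complex eigenvalue of A* has strictly negative real part. -/
open Matrix

lemma quad_re_neg (z : ℂ) (T D : ℝ) (hT : 0 < T) (hD : 0 < D)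
    (h : z * z + (T : ℂ) * z + (D : ℂ) = 0) : z.re < 0 := by
  by_contra hre
  push_neg at hre
  rw [Complex.ext_iff] at h
  simp [Complex.mul_re, Complex.mul_im] at h
  obtain ⟨h1, h2⟩ := h
  -- h2 : imaginary part zero
  have him : z.im * (2 * z.re + T) = 0 := by ring_nf; ring_nf at h2; linarith
  have hpos : 0 < 2 * z.re + T := by linarith
  have hzim : z.im = 0 := by
    rcases mul_eq_zero.mp him with h | h
    · exact h
    · linarith
  nlinarith [sq_nonneg z.re]

/-- Model 2 (regulated self-renewal): at the unique positive steady state `(x*, y*)`, the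
Jacobian `A* = [[0, 2a'(y*)p x*], [2(1−a(y*))p, −2a'(y*)p x* − ν]]` has negative trace
and positive determinant; equivalently, every complex eigenvalue of `A*` has strictly
negative real part. -/
theorem model2_jacobian_stable
    (p μ ν : ℝ) (a : ℝ → ℝ)
    (hp : 0 < p) (hμ : 0 < μ) (hν : 0 < ν)
    (ha : ContDiff ℝ 2 a)
    (ha01 : ∀ y : ℝ, 0 ≤ y → 0 < a y ∧ a y < 1)
    (hadec : ∀ y : ℝ, 0 ≤ y → deriv a y < 0)
    (ha0p : μ < (2 * a 0 - 1) * p)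
    (halim : Filter.Tendsto a Filter.atTop (nhds 0))
    (hstab : ∀ y : ℝ, 0 < y → -(deriv a y) * y < 1 - a y)
    (F : ℝ × ℝ → ℝ × ℝ)
    (hF : ∀ x y : ℝ, F (x, y) = ((2 * a y - 1) * p * x - μ * x,
      2 * (1 - a y) * p * x - ν * y))
    (xs ys : ℝ) (hxs : 0 < xs) (hys : 0 < ys)
    (hsteady : F (xs, ys) = (0, 0))
    (huniq : ∀ z : ℝ × ℝ, 0 < z.1 → 0 < z.2 → F z = (0, 0) → z = (xs, ys))
    (Astar : Matrix (Fin 2) (Fin 2) ℝ)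
    (hA : Astar = !![0, 2 * deriv a ys * p * xs;
      2 * (1 - a ys) * p, -(2 * deriv a ys * p * xs) - ν]) :
    Astar.trace < 0 ∧ 0 < Astar.det ∧
      ∀ z ∈ spectrum ℂ (Astar.map (Complex.ofReal)), z.re < 0 := by
  have hys' : (0:ℝ) ≤ ys := le_of_lt hys
  have ha' : deriv a ys < 0 := hadec ys hys'
  have haylt : a ys < 1 := (ha01 ys hys').2
  have hc1 : 0 < 1 - a ys := by linarith
  have hstab' : -(deriv a ys) * ys < 1 - a ys := hstab ys hys
  -- steady state second equation
  have hsteq : 2 * (1 - a ys) * p * xs - ν * ys = 0 := by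
    have := hF xs ys
    rw [this] at hsteady
    exact congrArg Prod.snd hsteady
  -- key inequality: -(2 * a' * p * xs) < ν
  have hkey : -(2 * deriv a ys * p * xs) < ν := by
    have h1 : -(2 * deriv a ys * p * xs) * (1 - a ys) < ν * (1 - a ys) := by
      nlinarith [mul_pos hν hys]
    exact lt_of_mul_lt_mul_right (by linarith [h1]) (le_of_lt hc1)
  have htr : Astar.trace < 0 := by
    rw [hA, Matrix.trace_fin_two]
    simp
    linarith
  have hdet : 0 < Astar.det := by
    rw [hA, Matrix.det_fin_two]
    simp
    nlinarith [mul_pos (mul_pos (mul_pos hp hxs) hp) hc1, ha']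
  refine ⟨htr, hdet, ?_⟩
  intro z hz
  rw [spectrum.mem_iff, Matrix.isUnit_iff_isUnit_det, isUnit_iff_ne_zero, not_ne_iff,
    Matrix.det_fin_two] at hz
  simp [hA, Matrix.algebraMap_eq_diagonal, Matrix.map_apply] at hz
  set b := 2 * deriv a ys * p * xs with hb
  set c := 2 * (1 - a ys) * p with hc
  -- hz : z * (z - (-b - ν)) - b * c = 0
  have hT : 0 < b + ν := by linarith
  have hD : 0 < -(b * c) := by
    rw [hb, hc]
    nlinarith [mul_pos (mul_pos (mul_pos hp hxs) hp) hc1, ha']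
  apply quad_re_neg z (b + ν) (-(b * c)) hT hD
  push_cast [hb, hc]
  push_cast at hz
  linear_combination hz
end

section
/- Let N : [0,∞) → ℝ² be differentiable with N'(t) = F(N(t)) for all t ≥ 0 and with N(0) = (n₀, n₁) where n₀ > 0 and n₁ > 0. Then the trajectory of N is bounded: there exists K > 0 such that ‖N(t)‖ ≤ K for all t ≥ 0. -/
open Set

lemma aux_decay_bound (f f' : ℝ → ℝ) (R : ℝ)
    (hf : ∀ t, 0 ≤ t → HasDerivAt f (f' t) t)
    (hle : ∀ t, 0 ≤ t → R ≤ f t → f' t ≤ 0) :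
    ∀ t, 0 ≤ t → f t ≤ max (f 0) R := by
  intro t₁ ht₁
  by_contra hgt
  push_neg at hgt
  set M := max (f 0) R with hM
  set S : Set ℝ := Icc 0 t₁ ∩ f ⁻¹' Iic M with hS
  have hfc : ContinuousOn f (Icc 0 t₁) :=
    fun s hs => (hf s hs.1).continuousAt.continuousWithinAt
  have hSc : IsClosed S := hfc.preimage_isClosed_of_isClosed isClosed_Icc isClosed_Iic
  have hSne : S.Nonempty := ⟨0, ⟨le_refl 0, ht₁⟩, mem_preimage.2 (mem_Iic.2 (le_max_left _ _))⟩
  have hSbdd : BddAbove S := ⟨t₁, fun s hs => hs.1.2⟩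
  have ht₀S : sSup S ∈ S := hSc.csSup_mem hSne hSbdd
  set t₀ := sSup S with ht₀
  have ht₀0 : 0 ≤ t₀ := ht₀S.1.1
  have ht₀le : t₀ ≤ t₁ := ht₀S.1.2
  have ht₀f : f t₀ ≤ M := ht₀S.2
  have ht₀lt : t₀ < t₁ := lt_of_le_of_ne ht₀le (by
    intro h; rw [h] at ht₀f; exact absurd ht₀f (not_le.2 hgt))
  have hmid : ∀ s, t₀ < s → s ≤ t₁ → M < f s := by
    intro s hs1 hs2
    by_contra h
    push_neg at h
    exact absurd (le_csSup hSbdd ⟨⟨le_trans ht₀0 hs1.le, hs2⟩, h⟩) (not_le.2 hs1)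
  have hanti : AntitoneOn f (Icc t₀ t₁) := by
    apply antitoneOn_of_deriv_nonpos (convex_Icc _ _)
    · exact fun s hs => (hf s (le_trans ht₀0 hs.1)).continuousAt.continuousWithinAt
    · intro s hs
      rw [interior_Icc] at hs
      exact (hf s (le_trans ht₀0 hs.1.le)).differentiableAt.differentiableWithinAt
    · intro s hs
      rw [interior_Icc] at hs
      have hs0 : 0 ≤ s := le_trans ht₀0 hs.1.le
      rw [(hf s hs0).deriv]
      exact hle s hs0 (le_trans (le_max_right _ _) (hmid s hs.1 hs.2.le).le)
  have hfin : f t₁ ≤ f t₀ :=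
    hanti ⟨le_refl _, ht₀le⟩ ⟨ht₀le, le_refl _⟩ ht₀le
  exact absurd (le_trans hfin ht₀f) (not_le.2 hgt)

set_option maxHeartbeats 2000000 in
/-- Model 1 (regulated division): every solution of `N' = F(N)` started in the open
positive quadrant has a bounded trajectory. -/
theorem model1_trajectory_bounded
    (a μ ν : ℝ) (p : ℝ → ℝ)
    (ha : 1 / 2 < a) (ha1 : a < 1) (hμ : 0 < μ) (hν : 0 < ν)
    (hp : ContDiff ℝ 2 p)
    (hppos : ∀ y : ℝ, 0 ≤ y → 0 < p y)
    (hpdec : ∀ y : ℝ, 0 ≤ y → deriv p y < 0)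
    (hp0 : μ < (2 * a - 1) * p 0)
    (hplim : Filter.Tendsto p Filter.atTop (nhds 0))
    (F : ℝ × ℝ → ℝ × ℝ)
    (hF : ∀ x y : ℝ, F (x, y) = ((2 * a - 1) * p y * x - μ * x,
      2 * (1 - a) * p y * x - ν * y))
    (N : ℝ → ℝ × ℝ) (n₀ n₁ : ℝ) (hn₀ : 0 < n₀) (hn₁ : 0 < n₁)
    (hN : ∀ t : ℝ, 0 ≤ t → HasDerivAt N (F (N t)) t)
    (hN0 : N 0 = (n₀, n₁)) :
    ∃ K : ℝ, 0 < K ∧ ∀ t : ℝ, 0 ≤ t → ‖N t‖ ≤ K := by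
  have h2a : 0 < 2 * a - 1 := by linarith
  have h1a : 0 < 1 - a := by linarith
  have hp0pos : 0 < p 0 := hppos 0 le_rfl
  set x : ℝ → ℝ := fun t => (N t).1 with hxdef
  set y : ℝ → ℝ := fun t => (N t).2 with hydef
  -- component derivatives
  have hFN : ∀ t : ℝ, F (N t) = ((2 * a - 1) * p (y t) * x t - μ * x t,
      2 * (1 - a) * p (y t) * x t - ν * y t) := by
    intro t
    have := hF (x t) (y t)
    simpa using this
  have hxD : ∀ t, 0 ≤ t →
      HasDerivAt x ((2 * a - 1) * p (y t) * x t - μ * x t) t := by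
    intro t ht
    have h1 : HasDerivAt x (F (N t)).1 t := by
      simpa using (hN t ht).hasFDerivAt.fst.hasDerivAt
    rwa [hFN t] at h1
  have hyD : ∀ t, 0 ≤ t →
      HasDerivAt y (2 * (1 - a) * p (y t) * x t - ν * y t) t := by
    intro t ht
    have h1 : HasDerivAt y (F (N t)).2 t := by
      simpa using (hN t ht).hasFDerivAt.snd.hasDerivAt
    rwa [hFN t] at h1
  have hcx : ContinuousOn x (Ici 0) :=
    fun t ht => (hxD t ht).continuousAt.continuousWithinAt
  have hcy : ContinuousOn y (Ici 0) :=
    fun t ht => (hyD t ht).continuousAt.continuousWithinAt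
  have hx0 : x 0 = n₀ := by simp only [hxdef, hN0]
  have hy0 : y 0 = n₁ := by simp only [hydef, hN0]
  -- positivity of x
  set g : ℝ → ℝ := fun t => (2 * a - 1) * p (y (max t 0)) - μ with hgdef
  have hgc : Continuous g := by
    have h1 : Continuous fun t : ℝ => y (max t 0) :=
      hcy.comp_continuous (continuous_id.max continuous_const) (fun t => le_max_right t 0)
    exact (continuous_const.mul (hp.continuous.comp h1)).sub continuous_const
  set G : ℝ → ℝ := fun t => ∫ s in (0:ℝ)..t, g s with hGdef
  have hG : ∀ t : ℝ, HasDerivAt G (g t) t :=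
    fun t => (hgc.integral_hasStrictDerivAt 0 t).hasDerivAt
  have hGcont : Continuous G := continuous_iff_continuousAt.2 fun t => (hG t).continuousAt
  have hconst : ∀ T, 0 ≤ T → x T * Real.exp (-G T) = n₀ := by
    intro T hT
    have hcont : ContinuousOn (fun t => x t * Real.exp (-G t)) (Icc 0 T) :=
      (hcx.mono Icc_subset_Ici_self).mul ((hGcont.neg.rexp).continuousOn)
    have hder : ∀ s ∈ Ico 0 T,
        HasDerivWithinAt (fun t => x t * Real.exp (-G t)) 0 (Ici s) s := by
      intro s hs
      have hxd := hxD s hs.1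
      have hGd : HasDerivAt (fun t => Real.exp (-G t)) (Real.exp (-G s) * (-(g s))) s :=
        (hG s).neg.exp
      have hmul := hxd.mul hGd
      have heq : ((2 * a - 1) * p (y s) * x s - μ * x s) * Real.exp (-G s)
          + x s * (Real.exp (-G s) * (-(g s))) = 0 := by
        have hgs : g s = (2 * a - 1) * p (y s) - μ := by
          simp only [hgdef, max_eq_left hs.1]
        rw [hgs]; ring
      rw [heq] at hmul
      exact hmul.hasDerivWithinAt
    have hres := constant_of_has_deriv_right_zero hcont hder T (right_mem_Icc.2 hT)
    have hG0 : G 0 = 0 := by simp [hGdef]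
    rw [hres]
    rw [hG0, hx0]
    simp
  have hxpos : ∀ t, 0 ≤ t → 0 < x t := by
    intro t ht
    have h := hconst t ht
    nlinarith [Real.exp_pos (-G t)]
  -- positivity of y
  have hypos : ∀ t, 0 ≤ t → 0 < y t := by
    by_contra hcon
    push_neg at hcon
    obtain ⟨t₂, ht₂, hyt₂⟩ := hcon
    set S : Set ℝ := Ici 0 ∩ y ⁻¹' Iic 0 with hSdef
    have hSc : IsClosed S := hcy.preimage_isClosed_of_isClosed isClosed_Ici isClosed_Iic
    have hSne : S.Nonempty := ⟨t₂, ht₂, mem_preimage.2 (mem_Iic.2 hyt₂)⟩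
    have hSbdd : BddBelow S := ⟨0, fun s hs => hs.1⟩
    set T := sInf S with hTdef
    have hTS : T ∈ S := hSc.csInf_mem hSne hSbdd
    have hT0 : 0 ≤ T := hTS.1
    have hyT : y T ≤ 0 := hTS.2
    have hlt : ∀ s, 0 ≤ s → s < T → 0 < y s := by
      intro s hs hsT
      by_contra h
      push_neg at h
      exact absurd (csInf_le hSbdd ⟨hs, mem_preimage.2 (mem_Iic.2 h)⟩) (not_le.2 hsT)
    have hTpos : 0 < T := by
      rcases eq_or_lt_of_le hT0 with h | h
      · exfalso; rw [← h] at hyT; rw [hy0] at hyT; linarith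
      · exact h
    have hyT0 : y T = 0 := by
      refine le_antisymm hyT ?_
      by_contra h
      push_neg at h
      have hcT : ContinuousAt y T := (hyD T hT0).continuousAt
      have hev1 : ∀ᶠ s in nhds T, y s < 0 := hcT.eventually_lt continuousAt_const h
      have hev2 : ∀ᶠ s in nhds T, 0 < s := eventually_gt_nhds hTpos
      have hev : ∀ᶠ s in nhdsWithin T (Iio T), y s < 0 ∧ 0 < s :=
        ((hev1.and hev2).filter_mono nhdsWithin_le_nhds)
      have hev' : ∀ᶠ s in nhdsWithin T (Iio T), (y s < 0 ∧ 0 < s) ∧ s < T :=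
        hev.and (eventually_mem_nhdsWithin.mono fun s hs => hs)
      obtain ⟨s, ⟨hys, hs0⟩, hsT⟩ := hev'.exists
      exact absurd (csInf_le hSbdd ⟨hs0.le, mem_preimage.2 (mem_Iic.2 hys.le)⟩)
        (not_le.2 hsT)
    have hmono : MonotoneOn (fun t => y t * Real.exp (ν * t)) (Icc 0 T) := by
      apply monotoneOn_of_deriv_nonneg (convex_Icc _ _)
      · exact ((hcy.mono Icc_subset_Ici_self).mul
          ((continuous_const.mul continuous_id).rexp.continuousOn))
      · intro s hs
        rw [interior_Icc] at hs
        have hs0 : 0 ≤ s := hs.1.le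
        have hd : HasDerivAt (fun t => y t * Real.exp (ν * t))
            ((2 * (1 - a) * p (y s) * x s - ν * y s) * Real.exp (ν * s)
              + y s * (Real.exp (ν * s) * (ν * 1))) s :=
          (hyD s hs0).mul (((hasDerivAt_id s).const_mul ν).exp)
        exact hd.differentiableAt.differentiableWithinAt
      · intro s hs
        rw [interior_Icc] at hs
        have hs0 : 0 ≤ s := hs.1.le
        have hd : HasDerivAt (fun t => y t * Real.exp (ν * t))
            ((2 * (1 - a) * p (y s) * x s - ν * y s) * Real.exp (ν * s)
              + y s * (Real.exp (ν * s) * (ν * 1))) s :=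
          (hyD s hs0).mul (((hasDerivAt_id s).const_mul ν).exp)
        rw [hd.deriv]
        have hps : 0 < p (y s) := hppos _ (hlt s hs0 hs.2).le
        have hxs := hxpos s hs0
        have hkey : (2 * (1 - a) * p (y s) * x s - ν * y s) * Real.exp (ν * s)
            + y s * (Real.exp (ν * s) * (ν * 1))
            = 2 * (1 - a) * p (y s) * x s * Real.exp (ν * s) := by ring
        rw [hkey]
        have := Real.exp_pos (ν * s)
        nlinarith [mul_pos (mul_pos (mul_pos (by linarith : (0:ℝ) < 2 * (1 - a)) hps) hxs) this]
    have hfin : y 0 * Real.exp (ν * 0) ≤ y T * Real.exp (ν * T) :=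
      hmono ⟨le_refl 0, hT0⟩ ⟨hT0, le_refl T⟩ hT0
    rw [hyT0, hy0] at hfin
    simp at hfin
    linarith
  -- p is antitone on [0, ∞)
  have hpanti : AntitoneOn p (Ici 0) := by
    apply antitoneOn_of_deriv_nonpos (convex_Ici 0) hp.continuous.continuousOn
    · exact (hp.differentiable (by norm_num)).differentiableOn
    · intro s hs
      rw [interior_Ici] at hs
      exact (hpdec s hs.le).le
  -- choice of Y
  have hYex : ∃ Y : ℝ, 0 ≤ Y ∧ p Y < μ / (2 * (2 * a - 1)) := by
    have hε : 0 < μ / (2 * (2 * a - 1)) := by positivity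
    have := (hplim.eventually (gt_mem_nhds hε))
    obtain ⟨Y₀, hY₀⟩ := Filter.eventually_atTop.1 this
    exact ⟨max Y₀ 0, le_max_right _ _, hY₀ _ (le_max_left _ _)⟩
  obtain ⟨Y, hY0, hYp⟩ := hYex
  have hpY : 0 < p Y := hppos Y hY0
  have hYhalf : (2 * a - 1) * p Y ≤ μ / 2 := by
    have h := (lt_div_iff₀ (by positivity : (0:ℝ) < 2 * (2 * a - 1))).1 hYp
    nlinarith
  -- constants
  set X₁ : ℝ := ν * Y / ((1 - a) * p Y) with hX₁def
  have hX₁ : 0 ≤ X₁ := by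
    rw [hX₁def]
    exact div_nonneg (mul_nonneg hν.le hY0) (mul_pos h1a hpY).le
  have hX₁eq : (1 - a) * p Y * X₁ = ν * Y := by
    rw [hX₁def, mul_comm]
    exact div_mul_cancel₀ _ (ne_of_gt (mul_pos h1a hpY))
  set lam : ℝ := (2 * a - 1) * p 0 - μ with hlamdef
  have hlam : 0 < lam := by rw [hlamdef]; linarith
  set α : ℝ := (2 / μ) * (2 * (1 - a) * p 0 + 1) with hαdef
  have hq : (0:ℝ) < 2 * (1 - a) * p 0 + 1 := by nlinarith [mul_pos h1a hp0pos]
  have hα : 0 < α := by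
    rw [hαdef]; exact mul_pos (div_pos two_pos hμ) hq
  have hαμ : α * (μ / 2) = 2 * (1 - a) * p 0 + 1 := by
    rw [hαdef]; field_simp
  set β : ℝ := 1 / (Y + 1) with hβdef
  have hY1 : (0:ℝ) < Y + 1 := by linarith
  have hβ : 0 < β := by rw [hβdef]; exact one_div_pos.2 hY1
  have hβ1 : β * (Y + 1) = 1 := by
    rw [hβdef]; exact one_div_mul_cancel hY1.ne'
  set c : ℝ := Real.exp (-(β * Y)) with hcdef
  have hc : 0 < c := by rw [hcdef]; exact Real.exp_pos _
  have hc1 : c ≤ 1 := by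
    rw [hcdef]
    exact Real.exp_le_one_iff.2 (neg_nonpos.2 (mul_nonneg hβ.le hY0))
  set K : ℝ := (1 + α * lam / ((1 - a) * p Y)) / c + 1 with hKdef
  have hfrac : 0 ≤ α * lam / ((1 - a) * p Y) :=
    div_nonneg (mul_nonneg hα.le hlam.le) (mul_pos h1a hpY).le
  have hKnum : 0 < 1 + α * lam / ((1 - a) * p Y) := by linarith
  have hKpos : 0 < K := by
    rw [hKdef]
    have := div_pos hKnum hc
    linarith
  have hK1 : 1 ≤ K := by
    rw [hKdef]
    have : 1 ≤ (1 + α * lam / ((1 - a) * p Y)) / c := by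
      rw [le_div_iff₀ hc]
      linarith
    linarith
  have hKc : α * lam ≤ (K * c - 1) * ((1 - a) * p Y) := by
    have hKc' : K * c = (1 + α * lam / ((1 - a) * p Y)) + c := by
      rw [hKdef]; field_simp
    have hd : α * lam / ((1 - a) * p Y) * ((1 - a) * p Y) = α * lam :=
      div_mul_cancel₀ _ (ne_of_gt (mul_pos h1a hpY))
    have h2 : (K * c - 1) * ((1 - a) * p Y) = α * lam + c * ((1 - a) * p Y) := by
      rw [hKc']; linear_combination hd
    have h3 : 0 < c * ((1 - a) * p Y) := mul_pos hc (mul_pos h1a hpY)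
    linarith
  set C₂ : ℝ := K * ν * (Y + 1) * Real.log K with hC₂def
  have hlogK : 0 ≤ Real.log K := Real.log_nonneg hK1
  have hC₂ : 0 ≤ C₂ := by
    rw [hC₂def]
    exact mul_nonneg (mul_nonneg (mul_nonneg hKpos.le hν.le) hY1.le) hlogK
  set R : ℝ := Y + (Y + 1) * Real.log K + α * X₁ + α * C₂ + 1 with hRdef
  clear_value X₁ lam α β c K C₂ R
  -- the Lyapunov-type function
  set U : ℝ → ℝ := fun t => y t + α * x t
      - K * ((Y + 1) * (1 - Real.exp (-(β * y t)))) with hUdef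
  set U' : ℝ → ℝ := fun t =>
      (1 - K * Real.exp (-(β * y t))) * (2 * (1 - a) * p (y t) * x t - ν * y t)
      + α * ((2 * a - 1) * p (y t) * x t - μ * x t) with hU'def
  have hU : ∀ t, 0 ≤ t → HasDerivAt U (U' t) t := by
    intro t ht
    have hxd := hxD t ht
    have hyd := hyD t ht
    have hexp : HasDerivAt (fun s => Real.exp (-(β * y s)))
        (Real.exp (-(β * y t)) * (-(β * (2 * (1 - a) * p (y t) * x t - ν * y t)))) t :=
      ((hyd.const_mul β).neg).exp
    have hcomb := (hyd.add (hxd.const_mul α)).sub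
      (((hexp.const_sub 1).const_mul (Y + 1)).const_mul K)
    convert hcomb using 1
    case e'_4 => rfl
    case e'_5 => rfl
    case e'_8 => rfl
    rw [hU'def]
    linear_combination (K * Real.exp (-(β * y t))
      * (2 * (1 - a) * p (y t) * x t - ν * y t)) * hβ1
  clear_value x y g G U U'
  -- key differential inequality
  have hkey : ∀ t, 0 ≤ t → R ≤ U t → U' t ≤ 0 := by
    intro t ht hRU
    have hxt := hxpos t ht
    have hyt := hypos t ht
    have hyge : (0:ℝ) ≤ y t := hyt.le
    have hPpos : 0 < p (y t) := hppos _ hyge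
    have hPle : p (y t) ≤ p 0 := hpanti (mem_Ici.2 le_rfl) (mem_Ici.2 hyge) hyge
    have hs0 : 0 < Real.exp (-(β * y t)) := Real.exp_pos _
    have hs1 : Real.exp (-(β * y t)) ≤ 1 :=
      Real.exp_le_one_iff.2 (neg_nonpos.2 (mul_nonneg hβ.le hyge))
    have hUle : U t ≤ y t + α * x t := by
      have hψ : 0 ≤ K * ((Y + 1) * (1 - Real.exp (-(β * y t)))) :=
        mul_nonneg hKpos.le (mul_nonneg hY1.le (by linarith))
      have h3 : U t = y t + α * x t
          - K * ((Y + 1) * (1 - Real.exp (-(β * y t)))) := by rw [hUdef]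
      linarith
    simp only [hU'def]
    rcases le_or_gt (y t) Y with hyY | hyY
    · -- region y ≤ Y
      have hsc : c ≤ Real.exp (-(β * y t)) := by
        rw [hcdef]
        exact Real.exp_le_exp.2 (neg_le_neg (mul_le_mul_of_nonneg_left hyY hβ.le))
      have hpYle : p Y ≤ p (y t) := hpanti (mem_Ici.2 hyge) (mem_Ici.2 hY0) hyY
      rcases le_or_gt X₁ (x t) with hxX | hxX
      · -- case A
        have h3 : (1 - a) * p Y * x t ≤ (1 - a) * p (y t) * x t :=
          mul_le_mul_of_nonneg_right (mul_le_mul_of_nonneg_left hpYle h1a.le) hxt.le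
        have hyd_lb : (1 - a) * p Y * x t ≤ 2 * (1 - a) * p (y t) * x t - ν * y t := by
          have h1 : ν * y t ≤ ν * Y := mul_le_mul_of_nonneg_left hyY hν.le
          have h2 : (1 - a) * p Y * X₁ ≤ (1 - a) * p Y * x t :=
            mul_le_mul_of_nonneg_left hxX (mul_pos h1a hpY).le
          linarith [hX₁eq]
        have hy'nn : 0 ≤ 2 * (1 - a) * p (y t) * x t - ν * y t :=
          le_trans (mul_nonneg (mul_nonneg h1a.le hpY.le) hxt.le) hyd_lb
        have hKc1 : 1 ≤ K * c := by
          by_contra hcon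
          push_neg at hcon
          have hh := mul_pos hα hlam
          have h2 : (K * c - 1) * ((1 - a) * p Y) ≤ 0 :=
            mul_nonpos_iff.2 (Or.inr ⟨by linarith, (mul_pos h1a hpY).le⟩)
          linarith [hKc]
        have hKse : K * c ≤ K * Real.exp (-(β * y t)) :=
          mul_le_mul_of_nonneg_left hsc hKpos.le
        have e1 : (1 - K * Real.exp (-(β * y t)))
              * (2 * (1 - a) * p (y t) * x t - ν * y t)
            ≤ (1 - K * c) * ((1 - a) * p Y * x t) := by
          have h1 : (1 - K * Real.exp (-(β * y t))) ≤ 1 - K * c := by linarith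
          have h2 : 1 - K * c ≤ 0 := by linarith
          calc (1 - K * Real.exp (-(β * y t)))
                * (2 * (1 - a) * p (y t) * x t - ν * y t)
              ≤ (1 - K * c) * (2 * (1 - a) * p (y t) * x t - ν * y t) :=
                mul_le_mul_of_nonneg_right h1 hy'nn
            _ ≤ (1 - K * c) * ((1 - a) * p Y * x t) :=
                mul_le_mul_of_nonpos_left hyd_lb h2
        have e2 : α * ((2 * a - 1) * p (y t) * x t - μ * x t) ≤ α * lam * x t := by
          have h1 : (2 * a - 1) * p (y t) * x t - μ * x t ≤ lam * x t := by
            rw [hlamdef]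
            linarith [mul_le_mul_of_nonneg_right
              (mul_le_mul_of_nonneg_left hPle h2a.le) hxt.le]
          calc α * ((2 * a - 1) * p (y t) * x t - μ * x t)
              ≤ α * (lam * x t) := mul_le_mul_of_nonneg_left h1 hα.le
            _ = α * lam * x t := by ring
        have e3 : (1 - K * c) * ((1 - a) * p Y * x t) ≤ -(α * lam) * x t := by
          have h1 : (1 - K * c) * ((1 - a) * p Y) ≤ -(α * lam) := by linarith [hKc]
          calc (1 - K * c) * ((1 - a) * p Y * x t)
              = ((1 - K * c) * ((1 - a) * p Y)) * x t := by ring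
            _ ≤ -(α * lam) * x t := mul_le_mul_of_nonneg_right h1 hxt.le
        linarith [e1, e2, e3]
      · -- case B : impossible since U ≥ R
        exfalso
        have h1 : U t ≤ Y + α * X₁ := by
          have h2 : α * x t ≤ α * X₁ := mul_le_mul_of_nonneg_left hxX.le hα.le
          linarith [hUle]
        have h2 : Y + α * X₁ < R := by
          rw [hRdef]
          linarith [mul_nonneg hY1.le hlogK, mul_nonneg hα.le hC₂]
        linarith [hRU]
    · -- region y > Y
      have hpYge : p (y t) ≤ p Y := hpanti (mem_Ici.2 hY0) (mem_Ici.2 hyge) hyY.le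
      have hxd2 : (2 * a - 1) * p (y t) * x t - μ * x t ≤ -(μ / 2) * x t := by
        have hco : (2 * a - 1) * p (y t) - μ ≤ -(μ / 2) := by
          linarith [mul_le_mul_of_nonneg_left hpYge h2a.le, hYhalf]
        calc (2 * a - 1) * p (y t) * x t - μ * x t
            = ((2 * a - 1) * p (y t) - μ) * x t := by ring
          _ ≤ -(μ / 2) * x t := mul_le_mul_of_nonneg_right hco hxt.le
      have hαx : α * ((2 * a - 1) * p (y t) * x t - μ * x t)
          ≤ -((2 * (1 - a) * p 0 + 1) * x t) := by
        calc α * ((2 * a - 1) * p (y t) * x t - μ * x t)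
            ≤ α * (-(μ / 2) * x t) := mul_le_mul_of_nonneg_left hxd2 hα.le
          _ = -((α * (μ / 2)) * x t) := by ring
          _ = -((2 * (1 - a) * p 0 + 1) * x t) := by rw [hαμ]
      have hp0x : 0 ≤ 2 * (1 - a) * p 0 * x t :=
        mul_nonneg (mul_nonneg (by linarith) hp0pos.le) hxt.le
      rcases le_or_gt (K * Real.exp (-(β * y t))) 1 with hKs | hKs
      · rcases le_or_gt (2 * (1 - a) * p (y t) * x t - ν * y t) 0 with hyd' | hyd'
        · have h1 : (1 - K * Real.exp (-(β * y t)))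
              * (2 * (1 - a) * p (y t) * x t - ν * y t) ≤ 0 :=
            mul_nonpos_iff.2 (Or.inl ⟨by linarith, hyd'⟩)
          linarith [h1, hαx, hp0x, hxt]
        · have hydle : 2 * (1 - a) * p (y t) * x t - ν * y t
              ≤ 2 * (1 - a) * p 0 * x t := by
            linarith [mul_le_mul_of_nonneg_right
              (mul_le_mul_of_nonneg_left hPle (by linarith : (0:ℝ) ≤ 2 * (1 - a))) hxt.le,
              mul_nonneg hν.le hyge]
          have h1 : (1 - K * Real.exp (-(β * y t)))
              * (2 * (1 - a) * p (y t) * x t - ν * y t)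
              ≤ 2 * (1 - a) * p 0 * x t := by
            have h2 : (1 - K * Real.exp (-(β * y t))) ≤ 1 := by
              linarith [mul_pos hKpos hs0]
            calc (1 - K * Real.exp (-(β * y t)))
                  * (2 * (1 - a) * p (y t) * x t - ν * y t)
                ≤ 1 * (2 * (1 - a) * p (y t) * x t - ν * y t) :=
                  mul_le_mul_of_nonneg_right h2 hyd'.le
              _ = 2 * (1 - a) * p (y t) * x t - ν * y t := one_mul _
              _ ≤ 2 * (1 - a) * p 0 * x t := hydle
          linarith [h1, hαx, hxt]
      · rcases le_or_gt 0 (2 * (1 - a) * p (y t) * x t - ν * y t) with hyd' | hyd'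
        · have h1 : 0 ≤ (K * Real.exp (-(β * y t)) - 1)
              * (2 * (1 - a) * p (y t) * x t - ν * y t) :=
            mul_nonneg (by linarith) hyd'
          linarith [h1, hαx, hp0x, hxt]
        · -- the C₂ case
          have hylt : y t < (Y + 1) * Real.log K := by
            have h1 : 1 / K < Real.exp (-(β * y t)) := by
              rw [div_lt_iff₀ hKpos]
              linarith [hKs]
            have h2 := Real.log_lt_log (by positivity) h1
            rw [Real.log_exp] at h2
            rw [Real.log_div one_ne_zero hKpos.ne', Real.log_one] at h2
            have h3 : β * y t < Real.log K := by linarith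
            have h4 := mul_lt_mul_of_pos_left h3 hY1
            have h5 : (Y + 1) * (β * y t) = y t := by
              linear_combination y t * hβ1
            linarith
          have hnyd : -(2 * (1 - a) * p (y t) * x t - ν * y t) ≤ ν * y t := by
            have h0 : 0 ≤ 2 * (1 - a) * p (y t) * x t :=
              mul_nonneg (mul_nonneg (by linarith) hPpos.le) hxt.le
            linarith
          have h1 : (1 - K * Real.exp (-(β * y t)))
              * (2 * (1 - a) * p (y t) * x t - ν * y t) ≤ C₂ := by
            have hKe1 : 0 ≤ K * Real.exp (-(β * y t)) - 1 := by linarith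
            have hKeK : K * Real.exp (-(β * y t)) ≤ K := by
              have := mul_le_mul_of_nonneg_left hs1 hKpos.le
              linarith
            have s1 : (K * Real.exp (-(β * y t)) - 1)
                  * (-(2 * (1 - a) * p (y t) * x t - ν * y t))
                ≤ (K * Real.exp (-(β * y t)) - 1) * (ν * y t) :=
              mul_le_mul_of_nonneg_left hnyd hKe1
            have s2 : (K * Real.exp (-(β * y t)) - 1) * (ν * y t) ≤ K * (ν * y t) :=
              mul_le_mul_of_nonneg_right (by linarith) (mul_nonneg hν.le hyge)
            have s3 : K * (ν * y t) ≤ K * (ν * ((Y + 1) * Real.log K)) :=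
              mul_le_mul_of_nonneg_left
                (mul_le_mul_of_nonneg_left hylt.le hν.le) hKpos.le
            have s4 : K * (ν * ((Y + 1) * Real.log K)) = C₂ := by
              rw [hC₂def]; ring
            linarith [s1, s2, s3]
          have hxC : C₂ ≤ x t := by
            have h2 : R ≤ (Y + 1) * Real.log K + α * x t := by
              linarith [hRU, hUle, hylt]
            have h3 : α * C₂ ≤ α * x t := by
              rw [hRdef] at h2
              linarith [hY0, mul_nonneg hα.le hX₁]
            exact le_of_mul_le_mul_left h3 hα
          linarith [h1, hαx, hxC, hp0x, hxt]
  -- conclusion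
  have hbound := aux_decay_bound U U' R hU hkey
  set M := max (U 0) R with hMdef
  have hsum : ∀ t, 0 ≤ t → y t + α * x t ≤ M + K * (Y + 1) := by
    intro t ht
    have h1 := hbound t ht
    have hyt := hypos t ht
    have hs1 : Real.exp (-(β * y t)) ≤ 1 :=
      Real.exp_le_one_iff.2 (neg_nonpos.2 (mul_nonneg hβ.le hyt.le))
    have hs0 : 0 < Real.exp (-(β * y t)) := Real.exp_pos _
    have h2 : K * ((Y + 1) * (1 - Real.exp (-(β * y t)))) ≤ K * (Y + 1) := by
      have h4 : (Y + 1) * (1 - Real.exp (-(β * y t))) ≤ (Y + 1) * 1 :=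
        mul_le_mul_of_nonneg_left (by linarith) hY1.le
      calc K * ((Y + 1) * (1 - Real.exp (-(β * y t))))
          ≤ K * ((Y + 1) * 1) := mul_le_mul_of_nonneg_left h4 hKpos.le
        _ = K * (Y + 1) := by ring
    have h3 : U t = y t + α * x t
        - K * ((Y + 1) * (1 - Real.exp (-(β * y t)))) := by rw [hUdef]
    linarith
  set B := M + K * (Y + 1) with hBdef
  have hBpos : 0 < B := by
    have h0 := hsum 0 le_rfl
    linarith [mul_pos hα (hxpos 0 le_rfl), hypos 0 le_rfl]
  refine ⟨max B (B / α), lt_of_lt_of_le hBpos (le_max_left _ _), ?_⟩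
  intro t ht
  have hxt := hxpos t ht
  have hyt := hypos t ht
  have hsm := hsum t ht
  have hyB : y t ≤ B := by linarith [mul_pos hα hxt]
  have hxB : x t ≤ B / α := by
    rw [le_div_iff₀ hα]
    linarith [hyt]
  rw [Prod.norm_def]
  apply max_le
  · have hfst : (N t).1 = x t := by rw [hxdef]
    rw [hfst, Real.norm_eq_abs, abs_of_pos hxt]
    exact le_trans hxB (le_max_right _ _)
  · have hsnd : (N t).2 = y t := by rw [hydef]
    rw [hsnd, Real.norm_eq_abs, abs_of_pos hyt]
    exact le_trans hyB (le_max_left _ _)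
end

section
/- Let p : ℝ → ℝ be continuous with p(y) > 0 and p strictly decreasing on [0,∞) and p(y) → 0 as y → ∞; let a ∈ (1/2, 1), μ > 0 and C > 0. If y : [0,∞) → ℝ is differentiable with y(0) ≥ 0 and y'(t) = C·exp(∫₀ᵗ ((2a−1)p(y(s)) − μ) ds) for all t ≥ 0, then y is bounded: there exists K such that y(t) ≤ K for all t ≥ 0. -/
/-- Auxiliary comparison lemma: if `y'(t) = C·exp(∫₀ᵗ ((2a−1)p(y(s)) − μ) ds)` with
`p` continuous, positive, strictly decreasing on `[0,∞)` and tending to `0` at infinity,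
`a ∈ (1/2, 1)`, `μ > 0`, `C > 0`, and `y(0) ≥ 0`, then `y` is bounded above. -/
theorem comparison_lemma_bounded
    (p : ℝ → ℝ) (a μ C : ℝ)
    (ha : 1 / 2 < a) (ha1 : a < 1) (hμ : 0 < μ) (hC : 0 < C)
    (hpc : Continuous p)
    (hppos : ∀ y : ℝ, 0 ≤ y → 0 < p y)
    (hpdec : StrictAntiOn p (Set.Ici (0 : ℝ)))
    (hplim : Filter.Tendsto p Filter.atTop (nhds 0))
    (y : ℝ → ℝ) (hy0 : 0 ≤ y 0)
    (hy : ∀ t : ℝ, 0 ≤ t →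
      HasDerivAt y (C * Real.exp (∫ s in (0 : ℝ)..t, ((2 * a - 1) * p (y s) - μ))) t) :
    ∃ K : ℝ, ∀ t : ℝ, 0 ≤ t → y t ≤ K := by
  have ha' : 0 < 2 * a - 1 := by linarith
  set ε : ℝ := μ / (2 * (2 * a - 1)) with hεdef
  have hεpos : 0 < ε := by positivity
  obtain ⟨M0, hM0⟩ := Filter.eventually_atTop.mp (hplim.eventually_lt_const hεpos)
  set M : ℝ := max M0 0 with hMdef
  set g : ℝ → ℝ := fun s => (2 * a - 1) * p (y s) - μ with hgdef
  set E : ℝ → ℝ := fun t => ∫ s in (0:ℝ)..t, g s with hEdef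
  have hyE : ∀ t : ℝ, 0 ≤ t → HasDerivAt y (C * Real.exp (E t)) t := hy
  have hycont : ContinuousOn y (Set.Ici 0) := fun t ht =>
    (hyE t ht).continuousAt.continuousWithinAt
  have hgcont : ContinuousOn g (Set.Ici 0) :=
    (continuousOn_const.mul (hpc.comp_continuousOn hycont)).sub continuousOn_const
  have hgint : ∀ u v : ℝ, 0 ≤ u → 0 ≤ v → IntervalIntegrable g MeasureTheory.volume u v := by
    intro u v hu hv
    apply (hgcont.mono ?_).intervalIntegrable
    intro x hx
    rcases Set.mem_uIcc.mp hx with ⟨h1, _⟩ | ⟨h1, _⟩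
    · exact le_trans hu h1
    · exact le_trans hv h1
  have hmono : MonotoneOn y (Set.Ici 0) := by
    apply (strictMonoOn_of_deriv_pos (convex_Ici 0) hycont ?_).monotoneOn
    intro x hx
    rw [interior_Ici] at hx
    rw [(hyE x hx.le).deriv]
    positivity
  by_cases hT : ∃ T : ℝ, 0 ≤ T ∧ M ≤ y T
  · obtain ⟨T, hT0, hTM⟩ := hT
    set B : ℝ := 2 * C * Real.exp (E T) / μ with hBdef
    have hB : 0 ≤ B := by positivity
    have hBμ : B * (μ / 2) = C * Real.exp (E T) := by
      rw [hBdef, div_mul_eq_mul_div, div_eq_iff hμ.ne']; ring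
    have hE : ∀ x : ℝ, T ≤ x → E x ≤ E T - μ / 2 * (x - T) := by
      intro x hx
      have hx0 : (0:ℝ) ≤ x := le_trans hT0 hx
      have hsplit : E x = E T + ∫ s in T..x, g s := by
        simp only [hEdef]
        exact (intervalIntegral.integral_add_adjacent_intervals
          (hgint 0 T le_rfl hT0) (hgint T x hT0 hx0)).symm
      have hgle : ∀ s ∈ Set.Icc T x, g s ≤ -(μ/2) := by
        intro s hs
        have hs0 : (0:ℝ) ≤ s := le_trans hT0 hs.1
        have hys : M ≤ y s := le_trans hTM
          (hmono (Set.mem_Ici.mpr hT0) (Set.mem_Ici.mpr hs0) hs.1)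
        have hpys : p (y s) < ε := hM0 (y s) (le_trans (le_max_left _ _) hys)
        have h1 : (2 * a - 1) * p (y s) ≤ (2 * a - 1) * ε :=
          mul_le_mul_of_nonneg_left hpys.le ha'.le
        have h2 : (2 * a - 1) * ε = μ / 2 := by
          rw [hεdef, mul_div_assoc', div_eq_iff (mul_pos two_pos ha').ne']; ring
        simp only [hgdef]
        linarith
      have hint : (∫ s in T..x, g s) ≤ ∫ s in T..x, (-(μ/2) : ℝ) :=
        intervalIntegral.integral_mono_on hx (hgint T x hT0 hx0)
          intervalIntegrable_const hgle
      rw [intervalIntegral.integral_const, smul_eq_mul] at hint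
      rw [hsplit]
      nlinarith [hint]
    set φ : ℝ → ℝ := fun t => y t + B * Real.exp (-(μ/2) * (t - T)) with hφdef
    have hφderiv : ∀ x : ℝ, T ≤ x → HasDerivAt φ
        (C * Real.exp (E x) + B * (Real.exp (-(μ/2) * (x - T)) * (-(μ/2)))) x := by
      intro x hx
      have h1 : HasDerivAt (fun t : ℝ => -(μ/2) * (t - T)) (-(μ/2)) x := by
        simpa using ((hasDerivAt_id x).sub_const T).const_mul (-(μ/2))
      exact (hyE x (le_trans hT0 hx)).add (h1.exp.const_mul B)
    have hφanti : AntitoneOn φ (Set.Ici T) := by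
      apply antitoneOn_of_deriv_nonpos (convex_Ici T)
      · intro x hx
        exact (hφderiv x hx).continuousAt.continuousWithinAt
      · intro x hx
        rw [interior_Ici] at hx
        exact (hφderiv x hx.le).differentiableAt.differentiableWithinAt
      · intro x hx
        rw [interior_Ici] at hx
        rw [(hφderiv x hx.le).deriv]
        have h1 : C * Real.exp (E x) ≤ C * Real.exp (E T) * Real.exp (-(μ/2) * (x - T)) := by
          rw [mul_assoc, ← Real.exp_add]
          apply mul_le_mul_of_nonneg_left _ hC.le
          apply Real.exp_le_exp.mpr
          have := hE x hx.le
          linarith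
        nlinarith [Real.exp_pos (-(μ/2) * (x - T))]
    refine ⟨y T + B, fun t ht => ?_⟩
    rcases le_total t T with h | h
    · have := hmono (Set.mem_Ici.mpr ht) (Set.mem_Ici.mpr hT0) h
      linarith
    · have h1 := hφanti (Set.mem_Ici.mpr le_rfl) (Set.mem_Ici.mpr h) h
      have h2 : φ T = y T + B := by simp [hφdef]
      have h3 : y t ≤ φ t := by
        have hpos : 0 ≤ B * Real.exp (-(μ/2) * (t - T)) := by positivity
        simp only [hφdef]
        linarith
      linarith [h2 ▸ h1]
  · push_neg at hT
    exact ⟨M, fun t ht => (hT t ht).le⟩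
end

section
/- The system N' = F(N) has no nonconstant periodic orbits in the open positive quadrant: if N : ℝ → ℝ² is differentiable with N'(t) = F(N(t)) and both components of N(t) strictly positive for all t, and N is periodic with some period T > 0, then N is constant. (This follows from Dulac's criterion with Dulac function 1/x, since the divergence of (−1/x)·F(x,y) equals −2(1−a)p'(y) + ν/x > 0 on the positive quadrant.) -/
open Set Filter MeasureTheory

/-- Model 1 (regulated division): the system `N' = F(N)` has no nonconstant periodic
orbits in the open positive quadrant (Dulac's criterion with Dulac function `1/x`). -/
theorem model1_no_periodic_orbits
    (a μ ν : ℝ) (p : ℝ → ℝ)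
    (ha : 1 / 2 < a) (ha1 : a < 1) (hμ : 0 < μ) (hν : 0 < ν)
    (hp : ContDiff ℝ 2 p)
    (hppos : ∀ y : ℝ, 0 ≤ y → 0 < p y)
    (hpdec : ∀ y : ℝ, 0 ≤ y → deriv p y < 0)
    (hp0 : μ < (2 * a - 1) * p 0)
    (hplim : Filter.Tendsto p Filter.atTop (nhds 0))
    (F : ℝ × ℝ → ℝ × ℝ)
    (hF : ∀ x y : ℝ, F (x, y) = ((2 * a - 1) * p y * x - μ * x,
      2 * (1 - a) * p y * x - ν * y))
    (N : ℝ → ℝ × ℝ)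
    (hN : ∀ t : ℝ, HasDerivAt N (F (N t)) t)
    (hpos : ∀ t : ℝ, 0 < (N t).1 ∧ 0 < (N t).2)
    (T : ℝ) (hT : 0 < T)
    (hper : ∀ t : ℝ, N (t + T) = N t) :
    ∀ s t : ℝ, N s = N t := by
  have hb : (0:ℝ) < 2 * a - 1 := by linarith
  have hc : (0:ℝ) < 2 * (1 - a) := by linarith
  set b := 2 * a - 1 with hbdef
  set c := 2 * (1 - a) with hcdef
  set ps := μ / b with hpsdef
  have hps : 0 < ps := div_pos hμ hb
  have hbps : b * ps = μ := by rw [hpsdef]; field_simp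
  have hp0' : ps < p 0 := by
    rw [hpsdef, div_lt_iff₀ hb]; nlinarith
  have hanti : StrictAntiOn p (Ici 0) :=
    strictAntiOn_of_deriv_neg (convex_Ici 0) hp.continuous.continuousOn
      (fun x hx => hpdec x (le_of_lt (by rwa [interior_Ici] at hx)))
  obtain ⟨Y, hY0, hYlt⟩ : ∃ Y : ℝ, 0 ≤ Y ∧ p Y < ps := by
    have h1 := (hplim.eventually (gt_mem_nhds hps)).and (eventually_ge_atTop (0:ℝ))
    obtain ⟨Y, h1, h2⟩ := h1.exists
    exact ⟨Y, h2, h1⟩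
  obtain ⟨ys, hysmem, hpys⟩ : ∃ ys ∈ Icc (0:ℝ) Y, p ys = ps := by
    have h2 := intermediate_value_Icc' hY0 hp.continuous.continuousOn
    exact h2 ⟨hYlt.le, hp0'.le⟩
  have hys0 : 0 ≤ ys := hysmem.1
  have hyspos : 0 < ys := by
    rcases eq_or_lt_of_le hys0 with h | h
    · exfalso; rw [← h] at hpys; linarith
    · exact h
  set xs := ν * ys / (c * ps) with hxsdef
  have hxspos : 0 < xs := div_pos (mul_pos hν hyspos) (mul_pos hc hps)
  -- φ strictly increasing on [0,∞)
  have hphi : ∀ y1 y2 : ℝ, 0 ≤ y1 → y1 < y2 →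
      ν * y1 / (c * p y1) < ν * y2 / (c * p y2) := by
    intro y1 y2 h0 h12
    have hp2 : 0 < p y2 := hppos _ (h0.trans h12.le)
    have hp12 : p y2 < p y1 := hanti h0 (h0.trans h12.le) h12
    have hp1 : 0 < p y1 := hppos _ h0
    calc ν * y1 / (c * p y1) ≤ ν * y1 / (c * p y2) := by
          apply div_le_div_of_nonneg_left (by positivity) (by positivity)
          nlinarith
      _ < ν * y2 / (c * p y2) := by
          rw [div_lt_div_iff_of_pos_right (by positivity)]
          nlinarith
  -- the quantity phi(ys) equals xs
  have hphiys : ν * ys / (c * p ys) = xs := by rw [hpys]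
  -- key sign fact
  have hkey : ∀ y : ℝ, 0 < y → y ≠ ys →
      (p y - ps) * (ν * y / (c * p y) - xs) < 0 := by
    intro y hy hne
    rcases lt_or_gt_of_ne hne with h | h
    · have h1 : ps < p y := by rw [← hpys]; exact hanti hy.le hys0 h
      have h2 : ν * y / (c * p y) < xs := by rw [← hphiys]; exact hphi y ys hy.le h
      nlinarith
    · have h1 : p y < ps := by rw [← hpys]; exact hanti hys0 hy.le h
      have h2 : xs < ν * y / (c * p y) := by rw [← hphiys]; exact hphi ys y hys0 h
      nlinarith
  -- Dulac/Lyapunov auxiliary function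
  set h : ℝ → ℝ := fun s => -(b * (p s - ps)) / (c * p s) with hhdef
  have hcontOn : ContinuousOn h (Ioi 0) := by
    apply ContinuousOn.div
    · exact (continuousOn_const.mul (hp.continuous.continuousOn.sub continuousOn_const)).neg
    · exact continuousOn_const.mul hp.continuous.continuousOn
    · intro s hs; exact ne_of_gt (mul_pos hc (hppos s (le_of_lt hs)))
  set G : ℝ → ℝ := fun y => ∫ s in ys..y, h s with hGdef
  have hG : ∀ y : ℝ, 0 < y → HasDerivAt G (h y) y := by
    intro y hy
    have hsub : uIcc ys y ⊆ Ioi 0 := by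
      intro s hs
      rcases mem_uIcc.mp hs with ⟨h1, _⟩ | ⟨h1, _⟩
      · exact lt_of_lt_of_le hyspos h1
      · exact lt_of_lt_of_le hy h1
    have hint : IntervalIntegrable h volume ys y := (hcontOn.mono hsub).intervalIntegrable
    have hmeas := hcontOn.stronglyMeasurableAtFilter (μ := volume) isOpen_Ioi y hy
    have hcAt : ContinuousAt h y := hcontOn.continuousAt (isOpen_Ioi.mem_nhds hy)
    exact intervalIntegral.integral_hasDerivAt_right hint hmeas hcAt
  -- component derivatives
  have hFval : ∀ t : ℝ, F (N t) = (b * p (N t).2 * (N t).1 - μ * (N t).1,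
      c * p (N t).2 * (N t).1 - ν * (N t).2) := by
    intro t
    conv_lhs => rw [← Prod.mk.eta (p := N t)]
    rw [hF]
  have hd1 : ∀ t : ℝ, HasDerivAt (fun t => (N t).1)
      (b * p (N t).2 * (N t).1 - μ * (N t).1) t := by
    intro t
    have h0 := ((hN t).hasFDerivAt.fst).hasDerivAt
    simpa [hFval t] using h0
  have hd2 : ∀ t : ℝ, HasDerivAt (fun t => (N t).2)
      (c * p (N t).2 * (N t).1 - ν * (N t).2) t := by
    intro t
    have h0 := ((hN t).hasFDerivAt.snd).hasDerivAt
    simpa [hFval t] using h0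
  -- Lyapunov function along the orbit
  set W : ℝ → ℝ := fun t => (N t).1 - xs * Real.log (N t).1 + G ((N t).2) with hWdef
  set w : ℝ → ℝ := fun t =>
      ((b * p (N t).2 * (N t).1 - μ * (N t).1)
        - xs * ((b * p (N t).2 * (N t).1 - μ * (N t).1) / (N t).1))
      + h ((N t).2) * (c * p (N t).2 * (N t).1 - ν * (N t).2) with hwdef
  have hW : ∀ t : ℝ, HasDerivAt W (w t) t := by
    intro t
    exact ((hd1 t).sub (((hd1 t).log (ne_of_gt (hpos t).1)).const_mul xs)).add
      (by have := (hG _ (hpos t).2).comp t (hd2 t); exact this)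
  have hw_eq : ∀ t : ℝ, w t =
      b * ((p (N t).2 - ps) * (ν * (N t).2 / (c * p (N t).2) - xs)) := by
    intro t
    have hX : 0 < (N t).1 := (hpos t).1
    have hpY : 0 < p (N t).2 := hppos _ (hpos t).2.le
    rw [hwdef]
    simp only [hhdef]
    rw [← hbps]
    field_simp
    ring
  have hwle : ∀ t : ℝ, w t ≤ 0 := by
    intro t
    rcases eq_or_ne ((N t).2) ys with heq | hne
    · rw [hw_eq t, heq, hpys]; simp
    · exact le_of_lt (by
        rw [hw_eq t]
        exact mul_neg_of_pos_of_neg hb (hkey _ (hpos t).2 hne))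
  have hWanti : Antitone W :=
    antitone_of_deriv_nonpos (fun t => (hW t).differentiableAt)
      (fun t => by rw [(hW t).deriv]; exact hwle t)
  -- periodicity for multiples of the period
  have hperN : ∀ n : ℕ, ∀ t : ℝ, N (t + n * T) = N t := by
    intro n
    induction n with
    | zero => intro t; simp
    | succ k ih =>
        intro t
        have e : t + ((k : ℝ) + 1) * T = (t + T) + k * T := by ring
        push_cast
        rw [e, ih (t + T), hper t]
  have hWconst : ∀ s t : ℝ, W s = W t := by
    suffices hst : ∀ s t : ℝ, s ≤ t → W s = W t by
      intro s t
      rcases le_total s t with h' | h'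
      · exact hst s t h'
      · exact (hst t s h').symm
    intro s t hst
    have h1 : W t ≤ W s := hWanti hst
    obtain ⟨n, hn⟩ := exists_nat_ge ((t - s) / T)
    have h2 : t ≤ s + n * T := by
      rw [div_le_iff₀ hT] at hn; linarith
    have h3 : W (s + n * T) ≤ W t := hWanti h2
    have h4 : W (s + n * T) = W s := by
      rw [hWdef]; simp only [hperN n s]
    linarith
  -- derivative of W is zero, so y ≡ ys
  have hyconst : ∀ t : ℝ, (N t).2 = ys := by
    intro t
    have hWc : W = fun _ => W 0 := funext fun u => hWconst u 0
    have h0 : deriv W t = w t := (hW t).deriv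
    rw [hWc, deriv_const] at h0
    by_contra hne
    have := mul_neg_of_pos_of_neg hb (hkey _ (hpos t).2 hne)
    rw [← hw_eq t, ← h0] at this
    exact lt_irrefl _ this
  -- x is then also constant
  have hxconst : ∀ t : ℝ, (N t).1 = xs := by
    intro t
    have hfe : (fun u => (N u).2) = fun _ => ys := funext hyconst
    have h0 : HasDerivAt (fun u => (N u).2) 0 t := by
      rw [hfe]; exact hasDerivAt_const t ys
    have h1 : c * p (N t).2 * (N t).1 - ν * (N t).2 = 0 := (hd2 t).unique h0
    rw [hyconst t, hpys] at h1
    rw [hxsdef]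
    have hcps : c * ps ≠ 0 := ne_of_gt (mul_pos hc hps)
    field_simp
    linarith
  intro s t
  exact Prod.ext (by rw [hxconst s, hxconst t]) (by rw [hyconst s, hyconst t])
end

section
/- The system N' = F(N) has no nonconstant periodic orbits in the open positive quadrant: if N : ℝ → ℝ² is differentiable with N'(t) = F(N(t)) and both components of N(t) strictly positive for all t, and N is periodic with some period T > 0, then N is constant. (This follows from Dulac's criterion with Dulac function 1/(xy), since the divergence of (−1/(xy))·F(x,y) equals (2a'(y)py + 2(1−a(y))p)/y² > 0 on the positive quadrant, using −a'(y)·y < 1 − a(y).) -/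
/-- Model 2 (regulated self-renewal): the system `N' = F(N)` has no nonconstant periodic
orbits in the open positive quadrant (Dulac's criterion with Dulac function `1/(xy)`). -/
theorem model2_no_periodic_orbits
    (p μ ν : ℝ) (a : ℝ → ℝ)
    (hp : 0 < p) (hμ : 0 < μ) (hν : 0 < ν)
    (ha : ContDiff ℝ 2 a)
    (ha01 : ∀ y : ℝ, 0 ≤ y → 0 < a y ∧ a y < 1)
    (hadec : ∀ y : ℝ, 0 ≤ y → deriv a y < 0)
    (ha0p : μ < (2 * a 0 - 1) * p)
    (halim : Filter.Tendsto a Filter.atTop (nhds 0))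
    (hstab : ∀ y : ℝ, 0 < y → -(deriv a y) * y < 1 - a y)
    (F : ℝ × ℝ → ℝ × ℝ)
    (hF : ∀ x y : ℝ, F (x, y) = ((2 * a y - 1) * p * x - μ * x,
      2 * (1 - a y) * p * x - ν * y))
    (N : ℝ → ℝ × ℝ)
    (hN : ∀ t : ℝ, HasDerivAt N (F (N t)) t)
    (hpos : ∀ t : ℝ, 0 < (N t).1 ∧ 0 < (N t).2)
    (T : ℝ) (hT : 0 < T)
    (hper : ∀ t : ℝ, N (t + T) = N t) :
    ∀ s t : ℝ, N s = N t := by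
  -- basic regularity of a
  have hadiff : Differentiable ℝ a := ha.differentiable (by norm_num)
  have hacont : Continuous a := hadiff.continuous
  -- f, c, m
  set f : ℝ → ℝ := fun s => (2 * a s - 1) * p - μ with hf_def
  set c : ℝ → ℝ := fun s => 2 * p * (1 - a s) with hc_def
  set m : ℝ → ℝ := fun s => s / c s with hm_def
  have hfc : Continuous f := by
    simp only [hf_def]; fun_prop
  have hcc : Continuous c := by
    simp only [hc_def]; fun_prop
  have hcpos : ∀ s : ℝ, 0 ≤ s → 0 < c s := by
    intro s hs
    have := (ha01 s hs).2
    have : 0 < 1 - a s := by linarith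
    simp only [hc_def]
    positivity
  -- a is strictly antitone on Ici 0
  have haanti : StrictAntiOn a (Set.Ici 0) := by
    apply strictAntiOn_of_deriv_neg (convex_Ici 0) hacont.continuousOn
    intro s hs
    rw [interior_Ici] at hs
    exact hadec s (le_of_lt hs)
  have hfanti : StrictAntiOn f (Set.Ici 0) := by
    intro s1 h1 s2 h2 h12
    have := haanti h1 h2 h12
    simp only [hf_def]
    nlinarith
  -- existence of y* > 0 with f y* = 0
  have hf0 : 0 < f 0 := by simp only [hf_def]; linarith
  obtain ⟨Y, hY1, hYsmall⟩ : ∃ Y : ℝ, 1 ≤ Y ∧ a Y < (p + μ) / (2 * p) := by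
    have hpos' : (0 : ℝ) < (p + μ) / (2 * p) := by positivity
    have h1 := halim.eventually_lt_const hpos'
    have h2 := Filter.eventually_ge_atTop (1 : ℝ)
    obtain ⟨Y, hY1, hY2⟩ := (h2.and h1).exists
    exact ⟨Y, hY1, hY2⟩
  have hfY : f Y < 0 := by
    have h2p : (0:ℝ) < 2 * p := by positivity
    have h := (lt_div_iff₀ h2p).mp hYsmall
    simp only [hf_def]
    nlinarith
  obtain ⟨ystar, hystar_mem, hfystar⟩ : ∃ y ∈ Set.Ioo (0:ℝ) Y, f y = 0 := by
    have h0Y : (0:ℝ) ≤ Y := by linarith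
    have : (0:ℝ) ∈ Set.Ioo (f Y) (f 0) := ⟨hfY, hf0⟩
    have := intermediate_value_Ioo' h0Y hfc.continuousOn this
    obtain ⟨y, hy, hfy⟩ := this
    exact ⟨y, hy, hfy⟩
  have hystar_pos : 0 < ystar := hystar_mem.1
  have hystar_nonneg : (0:ℝ) ≤ ystar := le_of_lt hystar_pos
  -- sign of f
  have hfsign_lt : ∀ s : ℝ, 0 ≤ s → s < ystar → 0 < f s := by
    intro s hs hlt
    have := hfanti hs hystar_nonneg hlt
    linarith [hfystar]
  have hfsign_gt : ∀ s : ℝ, ystar < s → f s < 0 := by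
    intro s hlt
    have := hfanti hystar_nonneg (le_of_lt (lt_trans hystar_pos hlt)) hlt
    linarith [hfystar]
  -- m strictly monotone on Ici 0
  have hmderiv : ∀ s : ℝ, 0 < s → HasDerivAt m
      ((1 * c s - s * (2 * p * (0 - deriv a s))) / (c s) ^ 2) s := by
    intro s hs
    have hda : HasDerivAt a (deriv a s) s := (hadiff s).hasDerivAt
    have hdc : HasDerivAt c (2 * p * (0 - deriv a s)) s := by
      simpa [hc_def] using ((hasDerivAt_const s (1:ℝ)).sub hda).const_mul (2 * p)
    exact (hasDerivAt_id s).div hdc (ne_of_gt (hcpos s (le_of_lt hs)))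
  have hmmono : StrictMonoOn m (Set.Ici 0) := by
    apply strictMonoOn_of_deriv_pos (convex_Ici 0)
    · apply ContinuousOn.div continuousOn_id hcc.continuousOn
      intro s hs
      exact ne_of_gt (hcpos s hs)
    · intro s hs
      rw [interior_Ici] at hs
      rw [(hmderiv s hs).deriv]
      have hnum : 0 < 1 * c s - s * (2 * p * (0 - deriv a s)) := by
        have := hstab s hs
        simp only [hc_def]
        nlinarith
      have := hcpos s (le_of_lt hs)
      positivity
  -- key sign lemma
  have hkey : ∀ s : ℝ, 0 < s → f s * (m s - m ystar) ≤ 0 := by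
    intro s hs
    rcases lt_trichotomy s ystar with h | h | h
    · have h1 := hfsign_lt s (le_of_lt hs) h
      have h2 := hmmono (le_of_lt hs) hystar_nonneg h
      nlinarith
    · simp [h]
    · have h1 := hfsign_gt s h
      have h2 := hmmono hystar_nonneg (le_of_lt (lt_trans hystar_pos h)) h
      nlinarith
  have hkey0 : ∀ s : ℝ, 0 < s → f s * (m s - m ystar) = 0 → s = ystar := by
    intro s hs h0
    rcases lt_trichotomy s ystar with h | h | h
    · have h1 := hfsign_lt s (le_of_lt hs) h
      have h2 := hmmono (le_of_lt hs) hystar_nonneg h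
      nlinarith
    · exact h
    · have h1 := hfsign_gt s h
      have h2 := hmmono hystar_nonneg (le_of_lt (lt_trans hystar_pos h)) h
      nlinarith
  -- components of N
  set X : ℝ → ℝ := fun t => (N t).1 with hX_def
  set Yc : ℝ → ℝ := fun t => (N t).2 with hY_def
  have hXpos : ∀ t, 0 < X t := fun t => (hpos t).1
  have hYpos : ∀ t, 0 < Yc t := fun t => (hpos t).2
  have hXd : ∀ t, HasDerivAt X (f (Yc t) * X t) t := by
    intro t
    have h := (hN t).fst
    have hFN : F (N t) = ((2 * a (Yc t) - 1) * p * X t - μ * X t,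
        2 * (1 - a (Yc t)) * p * X t - ν * Yc t) := by
      rw [show N t = (X t, Yc t) from rfl] at h ⊢
      exact hF (X t) (Yc t)
    rw [hFN] at h
    have h2 : HasDerivAt X ((2 * a (Yc t) - 1) * p * X t - μ * X t) t := h
    have heq : (2 * a (Yc t) - 1) * p * X t - μ * X t = f (Yc t) * X t := by
      simp only [hf_def]; ring
    exact heq ▸ h2
  have hYd : ∀ t, HasDerivAt Yc (c (Yc t) * X t - ν * Yc t) t := by
    intro t
    have h := (hN t).snd
    have hFN : F (N t) = ((2 * a (Yc t) - 1) * p * X t - μ * X t,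
        2 * (1 - a (Yc t)) * p * X t - ν * Yc t) := by
      rw [show N t = (X t, Yc t) from rfl]
      exact hF (X t) (Yc t)
    rw [hFN] at h
    have h2 : HasDerivAt Yc (2 * (1 - a (Yc t)) * p * X t - ν * Yc t) t := h
    have heq : 2 * (1 - a (Yc t)) * p * X t - ν * Yc t = c (Yc t) * X t - ν * Yc t := by
      simp only [hc_def]; ring
    exact heq ▸ h2
  -- the integral term
  set g : ℝ → ℝ := fun s => -(f s) / c s with hg_def
  set G : ℝ → ℝ := fun r => ∫ s in ystar..r, g s with hG_def
  have hgcontOn : ContinuousOn g (Set.Ioi 0) := by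
    intro s hs
    rw [Set.mem_Ioi] at hs
    exact ((hfc.neg.continuousAt).div hcc.continuousAt
      (ne_of_gt (hcpos s (le_of_lt hs)))).continuousWithinAt
  have hGd : ∀ r : ℝ, 0 < r → HasDerivAt G (g r) r := by
    intro r hr
    apply intervalIntegral.integral_hasDerivAt_right
    · apply ContinuousOn.intervalIntegrable
      apply hgcontOn.mono
      intro s hs
      rw [Set.mem_uIcc] at hs
      rcases hs with ⟨h1, _⟩ | ⟨h1, _⟩
      · exact lt_of_lt_of_le hystar_pos h1
      · exact lt_of_lt_of_le hr h1
    · exact hgcontOn.stronglyMeasurableAtFilter isOpen_Ioi r hr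
    · exact (hgcontOn r hr).continuousAt (Ioi_mem_nhds hr)
  -- the Lyapunov function along the orbit
  set xstar : ℝ := ν * m ystar with hxstar_def
  set L : ℝ → ℝ := fun t => X t - xstar * Real.log (X t) + G (Yc t) with hL_def
  set D : ℝ → ℝ := fun t => ν * f (Yc t) * (m (Yc t) - m ystar) with hD_def
  have hLd : ∀ t, HasDerivAt L (D t) t := by
    intro t
    have h1 : HasDerivAt (fun t => X t - xstar * Real.log (X t))
        (f (Yc t) * X t - xstar * (f (Yc t) * X t / X t)) t :=
      (hXd t).sub (((hXd t).log (ne_of_gt (hXpos t))).const_mul xstar)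
    have h2 : HasDerivAt (fun t => G (Yc t)) (g (Yc t) * (c (Yc t) * X t - ν * Yc t)) t :=
      (hGd (Yc t) (hYpos t)).comp t (hYd t)
    have h3 : HasDerivAt L (f (Yc t) * X t - xstar * (f (Yc t) * X t / X t) +
        g (Yc t) * (c (Yc t) * X t - ν * Yc t)) t := h1.add h2
    convert h3 using 1
    have hx0 : X t ≠ 0 := ne_of_gt (hXpos t)
    have hcy : c (Yc t) ≠ 0 := ne_of_gt (hcpos (Yc t) (le_of_lt (hYpos t)))
    have hcs : c ystar ≠ 0 := ne_of_gt (hcpos ystar hystar_nonneg)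
    simp only [hD_def, hg_def, hm_def, hxstar_def]
    field_simp
    ring
  have hDnonpos : ∀ t, D t ≤ 0 := by
    intro t
    have := hkey (Yc t) (hYpos t)
    simp only [hD_def]
    nlinarith
  -- L is antitone
  have hLanti : ∀ s t : ℝ, s ≤ t → L t ≤ L s := by
    intro s t hst
    have h := antitoneOn_of_deriv_nonpos (convex_univ)
      (fun z _ => ((hLd z).continuousAt).continuousWithinAt)
      (fun z _ => ((hLd z).differentiableAt).differentiableWithinAt)
      (fun z _ => by rw [(hLd z).deriv]; exact hDnonpos z)
    exact h (Set.mem_univ s) (Set.mem_univ t) hst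
  -- periodicity
  have hperN : ∀ n : ℕ, ∀ t : ℝ, N (t + n * T) = N t := by
    intro n
    induction n with
    | zero => intro t; simp
    | succ k ih =>
      intro t
      have : t + (k + 1 : ℕ) * T = (t + T) + k * T := by push_cast; ring
      rw [this, ih (t + T), hper t]
  have hLper : ∀ n : ℕ, ∀ t : ℝ, L (t + n * T) = L t := by
    intro n t
    simp only [hL_def, hX_def, hY_def, hperN n t]
  -- L is constant
  have hLconst : ∀ s t : ℝ, L s = L t := by
    have key : ∀ s t : ℝ, s ≤ t → L s = L t := by
      intro s t hst
      obtain ⟨n, hn⟩ := exists_nat_ge ((t - s) / T)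
      have hn' : t ≤ s + n * T := by
        have := (div_le_iff₀ hT).mp hn
        linarith
      have h1 := hLanti s t hst
      have h2 := hLanti t (s + n * T) hn'
      rw [hLper n s] at h2
      linarith
    intro s t
    rcases le_total s t with h | h
    · exact key s t h
    · exact (key t s h).symm
  -- derivative of L is zero
  have hD0 : ∀ t, D t = 0 := by
    intro t
    have : L = fun _ => L 0 := funext (fun s => hLconst s 0)
    have h2 : HasDerivAt L 0 t := by rw [this]; exact hasDerivAt_const t (L 0)
    exact (hLd t).unique h2
  -- hence y is constant equal to ystar
  have hYconst : ∀ t, Yc t = ystar := by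
    intro t
    apply hkey0 (Yc t) (hYpos t)
    have := hD0 t
    simp only [hD_def] at this
    rcases mul_eq_zero.mp this with h | h
    · rcases mul_eq_zero.mp h with h | h
      · exact absurd h (ne_of_gt hν)
      · rw [h]; ring
    · rw [h]; ring
  -- hence x is constant equal to xstar
  have hXconst : ∀ t, X t = ν * Yc t / c (Yc t) := by
    intro t
    have hy0 : HasDerivAt Yc 0 t := by
      have : Yc = fun _ => ystar := funext hYconst
      rw [this]; exact hasDerivAt_const t ystar
    have := (hYd t).unique hy0
    have hcy := hcpos (Yc t) (le_of_lt (hYpos t))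
    rw [eq_div_iff (ne_of_gt hcy)]
    linarith
  intro s t
  have hx : X s = X t := by
    rw [hXconst s, hXconst t, hYconst s, hYconst t]
  have hy : Yc s = Yc t := by rw [hYconst s, hYconst t]
  exact Prod.ext hx hy
end

section
/- The open positive quadrant is invariant: if N : [0,∞) → ℝ² is differentiable with N'(t) = F(N(t)) for all t ≥ 0 and N(0) = (n₀, n₁) with n₀ > 0 and n₁ > 0, then both components of N(t) are strictly positive for every t ≥ 0. In particular the first component satisfies N₀(t) = n₀·exp(∫₀ᵗ ((2a−1)p(N₁(s)) − μ) ds). -/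
open Set intervalIntegral

/-- Model 1 (regulated division): the open positive quadrant is invariant for `N' = F(N)`,
and the first component has the explicit exponential-integral representation
`N₀(t) = n₀ · exp(∫₀ᵗ ((2a−1)p(N₁(s)) − μ)ds)`. -/
theorem model1_positive_quadrant_invariant
    (a μ ν : ℝ) (p : ℝ → ℝ)
    (ha : 1 / 2 < a) (ha1 : a < 1) (hμ : 0 < μ) (hν : 0 < ν)
    (hp : ContDiff ℝ 2 p)
    (hppos : ∀ y : ℝ, 0 ≤ y → 0 < p y)
    (hpdec : ∀ y : ℝ, 0 ≤ y → deriv p y < 0)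
    (hp0 : μ < (2 * a - 1) * p 0)
    (hplim : Filter.Tendsto p Filter.atTop (nhds 0))
    (F : ℝ × ℝ → ℝ × ℝ)
    (hF : ∀ x y : ℝ, F (x, y) = ((2 * a - 1) * p y * x - μ * x,
      2 * (1 - a) * p y * x - ν * y))
    (N : ℝ → ℝ × ℝ) (n₀ n₁ : ℝ) (hn₀ : 0 < n₀) (hn₁ : 0 < n₁)
    (hN : ∀ t : ℝ, 0 ≤ t → HasDerivAt N (F (N t)) t)
    (hN0 : N 0 = (n₀, n₁)) :
    (∀ t : ℝ, 0 ≤ t → 0 < (N t).1 ∧ 0 < (N t).2) ∧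
    ∀ t : ℝ, 0 ≤ t →
      (N t).1 = n₀ * Real.exp (∫ s in (0 : ℝ)..t, ((2 * a - 1) * p ((N s).2) - μ)) := by
  -- component derivatives
  have hFval : ∀ t : ℝ, F (N t) = ((2 * a - 1) * p ((N t).2) * (N t).1 - μ * (N t).1,
      2 * (1 - a) * p ((N t).2) * (N t).1 - ν * (N t).2) := by
    intro t
    have := hF (N t).1 (N t).2
    rwa [Prod.mk.eta] at this
  have hx : ∀ t : ℝ, 0 ≤ t → HasDerivAt (fun s => (N s).1)
      ((2 * a - 1) * p ((N t).2) * (N t).1 - μ * (N t).1) t := by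
    intro t ht
    have h1 := (ContinuousLinearMap.fst ℝ ℝ ℝ).hasFDerivAt.comp_hasDerivAt t (hN t ht)
    simpa [hFval t, Function.comp_def] using h1
  have hy : ∀ t : ℝ, 0 ≤ t → HasDerivAt (fun s => (N s).2)
      (2 * (1 - a) * p ((N t).2) * (N t).1 - ν * (N t).2) t := by
    intro t ht
    have h1 := (ContinuousLinearMap.snd ℝ ℝ ℝ).hasFDerivAt.comp_hasDerivAt t (hN t ht)
    simpa [hFval t, Function.comp_def] using h1
  -- continuity of N on [0,∞)
  have hNc : ContinuousOn N (Ici (0:ℝ)) := fun t ht =>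
    (hN t ht).continuousAt.continuousWithinAt
  -- globally continuous version of the coefficient
  set g : ℝ → ℝ := fun s => (2 * a - 1) * p ((N (max s 0)).2) - μ with hgdef
  have hgc : Continuous g := by
    have hmax : Continuous fun s : ℝ => max s 0 := continuous_id.max continuous_const
    have hNmax : Continuous fun s : ℝ => N (max s 0) :=
      hNc.comp_continuous hmax fun s => le_max_right s 0
    exact (continuous_const.mul (hp.continuous.comp hNmax.snd)).sub continuous_const
  set G : ℝ → ℝ := fun t => ∫ s in (0:ℝ)..t, g s with hGdef
  have hG : ∀ t : ℝ, HasDerivAt G (g t) t := fun t =>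
    (hgc.integral_hasStrictDerivAt 0 t).hasDerivAt
  have hgeq : ∀ t : ℝ, 0 ≤ t → g t = (2 * a - 1) * p ((N t).2) - μ := by
    intro t ht; simp [hgdef, max_eq_left ht]
  -- the auxiliary function h = x * exp(-G) is constant on [0,∞)
  set h : ℝ → ℝ := fun t => (N t).1 * Real.exp (-G t) with hhdef
  have hh' : ∀ t : ℝ, 0 ≤ t → HasDerivAt h 0 t := by
    intro t ht
    have hexp : HasDerivAt (fun s => Real.exp (-G s)) (Real.exp (-G t) * (-g t)) t := by
      have := (Real.hasDerivAt_exp (-G t)).comp t ((hG t).neg)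
      simpa [mul_comm, Function.comp_def] using this
    have hprod := (hx t ht).mul hexp
    have : ((2 * a - 1) * p ((N t).2) * (N t).1 - μ * (N t).1) * Real.exp (-G t)
        + (N t).1 * (Real.exp (-G t) * (-g t)) = 0 := by
      rw [hgeq t ht]; ring
    rwa [this] at hprod
  have hconst : ∀ t : ℝ, 0 ≤ t → h t = n₀ := by
    intro t ht
    have h0 : h 0 = n₀ := by
      simp [hhdef, hGdef, hN0]
    rcases eq_or_lt_of_le ht with rfl | ht'
    · exact h0
    · have := constant_of_has_deriv_right_zero (a := 0) (b := t)
        (f := h)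
        (fun s hs => ((hh' s hs.1).continuousAt.continuousWithinAt))
        (fun s hs => (hh' s hs.1).hasDerivWithinAt)
      have := this t (by constructor <;> linarith)
      rw [h0] at this; exact this
  -- representation of the first component
  have hxrep : ∀ t : ℝ, 0 ≤ t → (N t).1 = n₀ * Real.exp (G t) := by
    intro t ht
    have h1 := hconst t ht
    have h2 : (N t).1 = h t * Real.exp (G t) := by
      simp only [hhdef, mul_assoc, ← Real.exp_add]
      simp
    rw [h2, h1]
  have hxpos : ∀ t : ℝ, 0 ≤ t → 0 < (N t).1 := fun t ht => by
    rw [hxrep t ht]; positivity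
  -- G t equals the integral in the statement for t ≥ 0
  have hGint : ∀ t : ℝ, 0 ≤ t →
      G t = ∫ s in (0:ℝ)..t, ((2 * a - 1) * p ((N s).2) - μ) := by
    intro t ht
    apply intervalIntegral.integral_congr
    intro s hs
    rw [uIcc_of_le ht] at hs
    exact hgeq s hs.1
  -- positivity of the second component
  have hypos : ∀ t : ℝ, 0 ≤ t → 0 < (N t).2 := by
    intro T hT
    by_contra hcon
    push_neg at hcon
    -- set of times in [0,T] where y ≤ 0
    set Z : Set ℝ := {t ∈ Icc 0 T | (N t).2 ≤ 0} with hZdef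
    have hZne : Z.Nonempty := ⟨T, ⟨⟨hT, le_refl T⟩, hcon⟩⟩
    have hycont : ContinuousOn (fun t => (N t).2) (Icc 0 T) := fun t ht =>
      ((hN t ht.1).continuousAt.continuousWithinAt).snd
    have hZclosed : IsClosed Z := by
      have : Z = Icc 0 T ∩ (fun t => (N t).2) ⁻¹' (Iic 0) := by
        ext t; simp [hZdef, and_comm]
      rw [this]
      exact (hycont.preimage_isClosed_of_isClosed isClosed_Icc isClosed_Iic)
    have hZbdd : BddBelow Z := ⟨0, fun t ht => ht.1.1⟩
    set t₁ : ℝ := sInf Z with ht₁def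
    have ht₁mem : t₁ ∈ Z := hZclosed.csInf_mem hZne hZbdd
    have ht₁0 : 0 ≤ t₁ := ht₁mem.1.1
    have ht₁T : t₁ ≤ T := ht₁mem.1.2
    have hylt : ∀ s : ℝ, 0 ≤ s → s < t₁ → 0 < (N s).2 := by
      intro s hs hst
      by_contra hy0
      push_neg at hy0
      have : s ∈ Z := ⟨⟨hs, le_trans hst.le ht₁T⟩, hy0⟩
      exact absurd (csInf_le hZbdd this) (not_le.mpr hst)
    have hyt₁ : (N t₁).2 ≤ 0 := ht₁mem.2
    have ht₁pos : 0 < t₁ := by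
      rcases eq_or_lt_of_le ht₁0 with heq | hlt
      · exfalso
        have : (N 0).2 = n₁ := by rw [hN0]
        rw [← heq] at hyt₁; rw [this] at hyt₁; linarith
      · exact hlt
    -- m = y * exp(ν t) is strictly increasing on [0, t₁]
    set m : ℝ → ℝ := fun t => (N t).2 * Real.exp (ν * t) with hmdef
    have hm' : ∀ t : ℝ, 0 ≤ t → HasDerivAt m
        (2 * (1 - a) * p ((N t).2) * (N t).1 * Real.exp (ν * t)) t := by
      intro t ht
      have hexp : HasDerivAt (fun s : ℝ => Real.exp (ν * s)) (Real.exp (ν * t) * ν) t := by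
        have := (Real.hasDerivAt_exp (ν * t)).comp t
          ((hasDerivAt_id t).const_mul ν)
        simpa [mul_comm, Function.comp_def] using this
      have hprod := (hy t ht).mul hexp
      have : (2 * (1 - a) * p ((N t).2) * (N t).1 - ν * (N t).2) * Real.exp (ν * t)
          + (N t).2 * (Real.exp (ν * t) * ν)
          = 2 * (1 - a) * p ((N t).2) * (N t).1 * Real.exp (ν * t) := by ring
      rwa [this] at hprod
    have hmono : StrictMonoOn m (Icc 0 t₁) := by
      apply strictMonoOn_of_hasDerivWithinAt_pos (convex_Icc 0 t₁)
        (f' := fun t => 2 * (1 - a) * p ((N t).2) * (N t).1 * Real.exp (ν * t))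
      · intro t ht
        exact ((hm' t ht.1).continuousAt.continuousWithinAt)
      · intro t ht
        rw [interior_Icc] at ht
        exact (hm' t ht.1.le).hasDerivWithinAt
      · intro t ht
        rw [interior_Icc] at ht
        have hy' : 0 < (N t).2 := hylt t ht.1.le ht.2
        have hp' : 0 < p ((N t).2) := hppos _ hy'.le
        have hx' : 0 < (N t).1 := hxpos t ht.1.le
        have h1a : 0 < 1 - a := by linarith
        positivity
    have h01 : m 0 < m t₁ :=
      hmono ⟨le_refl 0, ht₁0⟩ ⟨ht₁0, le_refl t₁⟩ ht₁pos
    have hm0 : m 0 = n₁ := by simp [hmdef, hN0]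
    have hmt₁ : m t₁ ≤ 0 := by
      have := Real.exp_pos (ν * t₁)
      have : (N t₁).2 * Real.exp (ν * t₁) ≤ 0 :=
        mul_nonpos_of_nonpos_of_nonneg hyt₁ (Real.exp_pos _).le
      simpa [hmdef] using this
    rw [hm0] at h01
    linarith
  refine ⟨fun t ht => ⟨hxpos t ht, hypos t ht⟩, fun t ht => ?_⟩
  rw [hxrep t ht, hGint t ht]
end

section
/- Let A be an n×n complex matrix that is diagonalizable, and let λ be the maximum of the real parts of its eigenvalues. Let R : [0,∞) → Mₙ(ℂ) be continuous with ∫₀^∞ ‖R(t)‖ dt < ∞, and let Φ : [0,∞) → Mₙ(ℂ) solve Φ'(t) = (A + R(t))·Φ(t) with Φ(0) = I. Then there exists a constant C such that ‖Φ(t)‖ ≤ C·e^{λt} for all t ≥ 0. -/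
open Matrix Filter

attribute [local instance] Matrix.normedAddCommGroup Matrix.normedSpace

private noncomputable instance matENormedAddCommMonoid {n : ℕ} : ENormedAddCommMonoid (Matrix (Fin n) (Fin n) ℂ) :=
  NormedAddCommGroup.toENormedAddCommMonoid

private lemma matNorm_mul {n : ℕ} (X Y : Matrix (Fin n) (Fin n) ℂ) :
    ‖X * Y‖ ≤ n * ‖X‖ * ‖Y‖ := by
  have h0 : (0:ℝ) ≤ n * ‖X‖ * ‖Y‖ := by positivity
  rw [Matrix.norm_le_iff h0]
  intro i j
  rw [Matrix.mul_apply]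
  calc ‖∑ k, X i k * Y k j‖ ≤ ∑ k : Fin n, ‖X i k * Y k j‖ := norm_sum_le _ _
    _ ≤ ∑ k : Fin n, ‖X‖ * ‖Y‖ := by
        refine Finset.sum_le_sum fun k _ => ?_
        rw [norm_mul]
        exact mul_le_mul (Matrix.norm_entry_le_entrywise_sup_norm X)
          (Matrix.norm_entry_le_entrywise_sup_norm Y) (norm_nonneg _) (norm_nonneg _)
    _ = n * ‖X‖ * ‖Y‖ := by simp [Finset.sum_const, mul_assoc]

private lemma matHasDerivAt_of_entries {n : ℕ} {f : ℝ → Matrix (Fin n) (Fin n) ℂ}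
    {f' : Matrix (Fin n) (Fin n) ℂ} {t : ℝ}
    (h : ∀ i j, HasDerivAt (fun t => f t i j) (f' i j) t) : HasDerivAt f f' t := by
  exact hasDerivAt_pi.2 fun i => hasDerivAt_pi.2 (h i)

private lemma matEntries_of_hasDerivAt {n : ℕ} {f : ℝ → Matrix (Fin n) (Fin n) ℂ}
    {f' : Matrix (Fin n) (Fin n) ℂ} {t : ℝ} (h : HasDerivAt f f' t) (i j : Fin n) :
    HasDerivAt (fun t => f t i j) (f' i j) t := by
  exact hasDerivAt_pi.1 (hasDerivAt_pi.1 h i) j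

private lemma matHasDerivAt_mul {n : ℕ} {f g : ℝ → Matrix (Fin n) (Fin n) ℂ}
    {f' g' : Matrix (Fin n) (Fin n) ℂ} {t : ℝ}
    (hf : HasDerivAt f f' t) (hg : HasDerivAt g g' t) :
    HasDerivAt (fun t => f t * g t) (f' * g t + f t * g') t := by
  refine matHasDerivAt_of_entries fun i j => ?_
  have h0 : ∀ s, (f s * g s) i j = ∑ k, f s i k * g s k j := fun s => Matrix.mul_apply
  simp only [h0]
  have hd : HasDerivAt (fun s => ∑ k : Fin n, f s i k * g s k j)
      (∑ k : Fin n, (f' i k * g t k j + f t i k * g' k j)) t :=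
    HasDerivAt.fun_sum fun k _ =>
      (matEntries_of_hasDerivAt hf i k).mul (matEntries_of_hasDerivAt hg k j)
  convert hd using 1
  simp [Matrix.add_apply, Matrix.mul_apply, Finset.sum_add_distrib]

private lemma hasDerivAt_diag_exp {n : ℕ} (d : Fin n → ℂ) (t : ℝ) :
    HasDerivAt (fun t : ℝ => diagonal fun i => Complex.exp (t * d i))
      (diagonal (fun i => d i * Complex.exp (t * d i))) t := by
  refine matHasDerivAt_of_entries fun i j => ?_
  rcases eq_or_ne i j with rfl | hij
  · simp only [Matrix.diagonal_apply_eq]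
    have h1 : HasDerivAt (fun z : ℂ => Complex.exp (z * d i))
        (Complex.exp ((t:ℂ) * d i) * d i) (t:ℂ) := (hasDerivAt_mul_const (d i)).cexp
    have := h1.comp_ofReal
    simpa [mul_comm] using this
  · simp only [Matrix.diagonal_apply_ne _ hij]
    exact hasDerivAt_const _ _

private lemma norm_diagonal_le {n : ℕ} {v : Fin n → ℂ} {C : ℝ} (hC : 0 ≤ C)
    (h : ∀ i, ‖v i‖ ≤ C) : ‖diagonal v‖ ≤ C := by
  rw [Matrix.norm_le_iff hC]
  intro i j
  rcases eq_or_ne i j with rfl | hij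
  · simpa using h i
  · simp [Matrix.diagonal_apply_ne _ hij, hC]

private lemma matContinuousOn_mul {n : ℕ} {X : Type*} [TopologicalSpace X]
    {f g : X → Matrix (Fin n) (Fin n) ℂ} {s : Set X}
    (hf : ContinuousOn f s) (hg : ContinuousOn g s) :
    ContinuousOn (fun x => f x * g x) s := by
  have hmulc : Continuous (fun p : Matrix (Fin n) (Fin n) ℂ × Matrix (Fin n) (Fin n) ℂ =>
      p.1 * p.2) := continuous_fst.matrix_mul continuous_snd
  exact hmulc.comp_continuousOn (hf.prodMk hg)

private lemma matMul_intervalIntegral {n : ℕ} (B : Matrix (Fin n) (Fin n) ℂ)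
    (f : ℝ → Matrix (Fin n) (Fin n) ℂ) (a b : ℝ)
    (hf : IntervalIntegrable f MeasureTheory.volume a b) :
    B * (∫ s in a..b, f s) = ∫ s in a..b, B * f s := by
  have h := (LinearMap.mulLeft ℝ B).toContinuousLinearMap.intervalIntegral_comp_comm hf
  exact h.symm

set_option maxHeartbeats 1000000 in
/-- Levinson-type estimate: if `A` is diagonalizable with `λ` the maximum real part of
its eigenvalues, `R` is continuous on `[0,∞)` with `∫₀^∞ ‖R(t)‖ dt < ∞`, and
`Φ' = (A + R(t))Φ`, `Φ(0) = I`, then `‖Φ(t)‖ ≤ C·e^{λt}` for some constant `C`. -/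
theorem levinson_fundamental_matrix_estimate
    (n : ℕ) (A : Matrix (Fin n) (Fin n) ℂ)
    (hdiag : ∃ P D : Matrix (Fin n) (Fin n) ℂ, IsUnit P.det ∧ D.IsDiag ∧ A = P * D * P⁻¹)
    (lam : ℝ)
    (hlam : IsGreatest {r : ℝ | ∃ z ∈ spectrum ℂ A, z.re = r} lam)
    (R : ℝ → Matrix (Fin n) (Fin n) ℂ)
    (hRcont : ContinuousOn R (Set.Ici (0 : ℝ)))
    (hRint : MeasureTheory.IntegrableOn (fun t => ‖R t‖) (Set.Ici (0 : ℝ)))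
    (Φ : ℝ → Matrix (Fin n) (Fin n) ℂ)
    (hΦ : ∀ t : ℝ, 0 ≤ t → HasDerivAt Φ ((A + R t) * Φ t) t)
    (hΦ0 : Φ 0 = 1) :
    ∃ C : ℝ, ∀ t : ℝ, 0 ≤ t → ‖Φ t‖ ≤ C * Real.exp (lam * t) := by
  classical
  obtain ⟨P, D, hP, hD, hA⟩ := hdiag
  set d : Fin n → ℂ := Matrix.diag D with hd
  have hDdiag : diagonal d = D := hD.diagonal_diag
  -- eigenvalue bound
  have hspec : ∀ i, (d i).re ≤ lam := by
    intro i
    refine hlam.2 ⟨d i, ?_, rfl⟩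
    obtain ⟨u, hu⟩ := (Matrix.isUnit_iff_isUnit_det P).2 hP
    have hsp : spectrum ℂ A = spectrum ℂ D := by
      rw [hA, ← hu, ← Matrix.coe_units_inv, spectrum.units_conjugate]
    rw [hsp, ← hDdiag, spectrum_diagonal]
    exact ⟨i, rfl⟩
  have hPP : P * P⁻¹ = 1 := Matrix.mul_nonsing_inv P hP
  have hPPinv : P⁻¹ * P = 1 := Matrix.nonsing_inv_mul P hP
  have conj : ∀ X Y : Matrix (Fin n) (Fin n) ℂ,
      (P * X * P⁻¹) * (P * Y * P⁻¹) = P * (X * Y) * P⁻¹ := by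
    intro X Y
    calc (P * X * P⁻¹) * (P * Y * P⁻¹) = P * X * (P⁻¹ * P) * Y * P⁻¹ := by
          simp only [mul_assoc]
      _ = P * (X * Y) * P⁻¹ := by rw [hPPinv, mul_one]; simp only [mul_assoc]
  -- the unperturbed fundamental matrix
  set E : ℝ → Matrix (Fin n) (Fin n) ℂ :=
    fun t => P * diagonal (fun i => Complex.exp (t * d i)) * P⁻¹ with hE
  have hE0 : E 0 = 1 := by
    simp [hE, hPP]
  have hEadd : ∀ t s : ℝ, E t * E s = E (t + s) := by
    intro t s
    show (P * diagonal (fun i => Complex.exp (t * d i)) * P⁻¹) *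
        (P * diagonal (fun i => Complex.exp (s * d i)) * P⁻¹) = _
    rw [conj, Matrix.diagonal_mul_diagonal]
    have : (fun i => Complex.exp (↑t * d i) * Complex.exp (↑s * d i)) =
        fun i => Complex.exp (↑(t + s) * d i) := by
      funext i
      rw [← Complex.exp_add]
      congr 1
      push_cast
      ring
    rw [this]
  have hEderiv : ∀ t : ℝ, HasDerivAt E (A * E t) t := by
    intro t
    have h1 := hasDerivAt_diag_exp d t
    have h2 := matHasDerivAt_mul (matHasDerivAt_mul (hasDerivAt_const t P) h1)
      (hasDerivAt_const t P⁻¹)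
    simp only [zero_mul, mul_zero, add_zero, zero_add] at h2
    convert h2 using 1
    rw [hA]
    show (P * D * P⁻¹) * (P * diagonal (fun i => Complex.exp (t * d i)) * P⁻¹) = _
    rw [conj, ← hDdiag, Matrix.diagonal_mul_diagonal]
  have hAcomm : ∀ t : ℝ, A * E t = E t * A := by
    intro t
    rw [hA]
    show (P * D * P⁻¹) * (P * diagonal (fun i => Complex.exp (t * d i)) * P⁻¹) =
      (P * diagonal (fun i => Complex.exp (t * d i)) * P⁻¹) * (P * D * P⁻¹)
    rw [conj, conj, ← hDdiag, Matrix.diagonal_mul_diagonal, Matrix.diagonal_mul_diagonal]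
    have : (fun i => d i * Complex.exp (↑t * d i)) =
        fun i => Complex.exp (↑t * d i) * d i := funext fun i => mul_comm _ _
    rw [this]
  have hEcont : Continuous E :=
    continuous_iff_continuousAt.2 fun t => (hEderiv t).continuousAt
  -- the norm bound on E
  set M : ℝ := (n:ℝ)^2 * ‖P‖ * ‖P⁻¹‖ + 1 with hM
  have hMb : (0:ℝ) ≤ (n:ℝ)^2 * ‖P‖ * ‖P⁻¹‖ := by positivity
  have hM1 : (1:ℝ) ≤ M := by rw [hM]; linarith
  have hM0 : (0:ℝ) < M := lt_of_lt_of_le one_pos hM1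
  have hEnorm : ∀ t : ℝ, 0 ≤ t → ‖E t‖ ≤ M * Real.exp (lam * t) := by
    intro t ht
    have hdiagn : ‖diagonal (fun i => Complex.exp (t * d i))‖ ≤ Real.exp (lam * t) := by
      refine norm_diagonal_le (Real.exp_nonneg _) fun i => ?_
      rw [Complex.norm_exp]
      refine Real.exp_le_exp.2 ?_
      have : ((t:ℂ) * d i).re = t * (d i).re := by simp [Complex.mul_re]
      rw [this, mul_comm lam t]
      exact mul_le_mul_of_nonneg_left (hspec i) ht
    calc ‖P * diagonal (fun i => Complex.exp (t * d i)) * P⁻¹‖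
        ≤ n * ‖P * diagonal (fun i => Complex.exp (t * d i))‖ * ‖P⁻¹‖ := matNorm_mul _ _
      _ ≤ n * (n * ‖P‖ * Real.exp (lam * t)) * ‖P⁻¹‖ := by
          refine mul_le_mul_of_nonneg_right (mul_le_mul_of_nonneg_left ?_ (by positivity))
            (norm_nonneg _)
          calc ‖P * diagonal (fun i => Complex.exp (t * d i))‖
              ≤ n * ‖P‖ * ‖diagonal (fun i => Complex.exp (t * d i))‖ := matNorm_mul _ _
            _ ≤ n * ‖P‖ * Real.exp (lam * t) :=
                mul_le_mul_of_nonneg_left hdiagn (by positivity)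
      _ ≤ M * Real.exp (lam * t) := by
          have h1 : (n:ℝ) * ((n:ℝ) * ‖P‖ * Real.exp (lam * t)) * ‖P⁻¹‖ =
              ((n:ℝ)^2 * ‖P‖ * ‖P⁻¹‖) * Real.exp (lam * t) := by ring
          rw [h1]
          refine mul_le_mul_of_nonneg_right ?_ (Real.exp_nonneg _)
          rw [hM]; linarith
  -- continuity facts
  have hΦcont : ContinuousOn Φ (Set.Ici 0) := fun s hs =>
    ((hΦ s hs).continuousAt).continuousWithinAt
  have hRΦcont : ContinuousOn (fun s => R s * Φ s) (Set.Ici 0) :=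
    matContinuousOn_mul hRcont hΦcont
  have hEnegcont : ContinuousOn (fun s : ℝ => E (-s)) (Set.Ici 0) :=
    (hEcont.comp continuous_neg).continuousOn
  have hgcont : ContinuousOn (fun s => E (-s) * (R s * Φ s)) (Set.Ici 0) :=
    matContinuousOn_mul hEnegcont hRΦcont
  -- variation of constants
  have key : ∀ t : ℝ, 0 ≤ t → Φ t = E t + ∫ s in (0:ℝ)..t, E (t - s) * (R s * Φ s) := by
    intro t ht
    have huIcc : Set.uIcc (0:ℝ) t = Set.Icc 0 t := Set.uIcc_of_le ht
    have hgint : IntervalIntegrable (fun s => E (-s) * (R s * Φ s)) MeasureTheory.volume 0 t := by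
      apply ContinuousOn.intervalIntegrable
      rw [huIcc]
      exact hgcont.mono Set.Icc_subset_Ici_self
    have hderiv : ∀ s ∈ Set.uIcc (0:ℝ) t,
        HasDerivAt (fun τ => E (-τ) * Φ τ) (E (-s) * (R s * Φ s)) s := by
      intro s hs
      rw [huIcc] at hs
      have hs0 : (0:ℝ) ≤ s := hs.1
      have hEneg : HasDerivAt (fun τ : ℝ => E (-τ)) ((-1 : ℝ) • (A * E (-s))) s :=
        HasDerivAt.scomp s (hEderiv (-s)) (hasDerivAt_neg s)
      have h := matHasDerivAt_mul hEneg (hΦ s hs0)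
      convert h using 1
      have hc : E (-s) * (A * Φ s) = A * E (-s) * Φ s := by
        rw [← mul_assoc, ← hAcomm (-s)]
      calc E (-s) * (R s * Φ s)
          = -(A * E (-s) * Φ s) + (E (-s) * (A * Φ s) + E (-s) * (R s * Φ s)) := by
            rw [hc]; abel
        _ = ((-1:ℝ) • (A * E (-s))) * Φ s + E (-s) * ((A + R s) * Φ s) := by
            rw [neg_one_smul, neg_mul, add_mul, mul_add]
    have hFTC := intervalIntegral.integral_eq_sub_of_hasDerivAt hderiv hgint
    have h00 : E (-(0:ℝ)) * Φ 0 = 1 := by rw [neg_zero, hE0, hΦ0, mul_one]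
    have hrep : E (-t) * Φ t = 1 + ∫ s in (0:ℝ)..t, E (-s) * (R s * Φ s) := by
      rw [hFTC, h00]; abel
    have hinv : E t * E (-t) = 1 := by rw [hEadd, add_neg_cancel, hE0]
    have hΦt : Φ t = E t * (E (-t) * Φ t) := by
      rw [← mul_assoc, hinv, one_mul]
    have hcongr : (∫ s in (0:ℝ)..t, E t * (E (-s) * (R s * Φ s))) =
        ∫ s in (0:ℝ)..t, E (t - s) * (R s * Φ s) := by
      refine intervalIntegral.integral_congr fun s _ => ?_
      rw [← mul_assoc, hEadd, ← sub_eq_add_neg]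
    calc Φ t = E t * (E (-t) * Φ t) := hΦt
      _ = E t * (1 + ∫ s in (0:ℝ)..t, E (-s) * (R s * Φ s)) := by rw [hrep]
      _ = E t + E t * ∫ s in (0:ℝ)..t, E (-s) * (R s * Φ s) := by rw [mul_add, mul_one]
      _ = E t + ∫ s in (0:ℝ)..t, E t * (E (-s) * (R s * Φ s)) := by
          rw [matMul_intervalIntegral (E t) _ 0 t hgint]
      _ = E t + ∫ s in (0:ℝ)..t, E (t - s) * (R s * Φ s) := by rw [hcongr]
  -- scalar quantities
  set K : ℝ := (n:ℝ)^2 * M with hK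
  have hK0 : (0:ℝ) ≤ K := by rw [hK]; positivity
  have hrcont : ContinuousOn (fun s => ‖R s‖) (Set.Ici (0:ℝ)) := hRcont.norm
  have hψcont : ContinuousOn (fun s => Real.exp (-(lam * s)) * ‖Φ s‖) (Set.Ici (0:ℝ)) := by
    refine ContinuousOn.mul ?_ hΦcont.norm
    exact (Real.continuous_exp.comp (continuous_const.mul continuous_id).neg).continuousOn
  have hqcont : ContinuousOn
      (fun s => ‖R s‖ * (Real.exp (-(lam * s)) * ‖Φ s‖)) (Set.Ici (0:ℝ)) :=
    hrcont.mul hψcont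
  have hψineq : ∀ t : ℝ, 0 ≤ t → Real.exp (-(lam * t)) * ‖Φ t‖ ≤
      M + K * ∫ s in (0:ℝ)..t, ‖R s‖ * (Real.exp (-(lam * s)) * ‖Φ s‖) := by
    intro t ht
    have hbound : ‖Φ t‖ ≤ M * Real.exp (lam * t) +
        ∫ s in (0:ℝ)..t, Real.exp (lam * t) * (K * (‖R s‖ * (Real.exp (-(lam * s)) * ‖Φ s‖))) := by
      rw [key t ht]
      refine le_trans (norm_add_le _ _) (add_le_add (hEnorm t ht) ?_)
      refine le_trans (intervalIntegral.norm_integral_le_integral_norm ht) ?_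
      have hEtscont : ContinuousOn (fun s : ℝ => E (t - s)) (Set.Icc 0 t) :=
        (hEcont.comp (continuous_const.sub continuous_id)).continuousOn
      have hcont1 : ContinuousOn (fun s => ‖E (t - s) * (R s * Φ s)‖) (Set.Icc 0 t) :=
        (matContinuousOn_mul hEtscont (hRΦcont.mono Set.Icc_subset_Ici_self)).norm
      have hcont2 : ContinuousOn
          (fun s => Real.exp (lam * t) * (K * (‖R s‖ * (Real.exp (-(lam * s)) * ‖Φ s‖))))
          (Set.Icc 0 t) :=
        continuousOn_const.mul (continuousOn_const.mul
          (hqcont.mono Set.Icc_subset_Ici_self))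
      refine intervalIntegral.integral_mono_on ht
        (ContinuousOn.intervalIntegrable (by rw [Set.uIcc_of_le ht]; exact hcont1))
        (ContinuousOn.intervalIntegrable (by rw [Set.uIcc_of_le ht]; exact hcont2))
        fun s hs => ?_
      have hs0 : (0:ℝ) ≤ s := hs.1
      have hts : (0:ℝ) ≤ t - s := sub_nonneg.2 hs.2
      have h1 : ‖E (t - s)‖ ≤ M * Real.exp (lam * (t - s)) := hEnorm _ hts
      have h2 : ‖R s * Φ s‖ ≤ (n:ℝ) * ‖R s‖ * ‖Φ s‖ := matNorm_mul (R s) (Φ s)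
      calc ‖E (t - s) * (R s * Φ s)‖
          ≤ (n:ℝ) * ‖E (t - s)‖ * ‖R s * Φ s‖ := matNorm_mul _ _
        _ ≤ (n:ℝ) * (M * Real.exp (lam * (t - s))) * ((n:ℝ) * ‖R s‖ * ‖Φ s‖) := by
            gcongr
        _ = Real.exp (lam * t) * (K * (‖R s‖ * (Real.exp (-(lam * s)) * ‖Φ s‖))) := by
            rw [show lam * (t - s) = lam * t + -(lam * s) by ring, Real.exp_add, hK]
            ring
    have hpull : (∫ s in (0:ℝ)..t,
        Real.exp (lam * t) * (K * (‖R s‖ * (Real.exp (-(lam * s)) * ‖Φ s‖)))) =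
        Real.exp (lam * t) *
          (K * ∫ s in (0:ℝ)..t, ‖R s‖ * (Real.exp (-(lam * s)) * ‖Φ s‖)) := by
      rw [intervalIntegral.integral_const_mul, intervalIntegral.integral_const_mul]
    rw [hpull] at hbound
    have hmul := mul_le_mul_of_nonneg_left hbound (Real.exp_nonneg (-(lam * t)))
    have hee : Real.exp (-(lam * t)) * Real.exp (lam * t) = 1 := by
      rw [← Real.exp_add]; simp
    calc Real.exp (-(lam * t)) * ‖Φ t‖
        ≤ Real.exp (-(lam * t)) * (M * Real.exp (lam * t) + Real.exp (lam * t) *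
            (K * ∫ s in (0:ℝ)..t, ‖R s‖ * (Real.exp (-(lam * s)) * ‖Φ s‖))) := hmul
      _ = (Real.exp (-(lam * t)) * Real.exp (lam * t)) *
            (M + K * ∫ s in (0:ℝ)..t, ‖R s‖ * (Real.exp (-(lam * s)) * ‖Φ s‖)) := by ring
      _ = M + K * ∫ s in (0:ℝ)..t, ‖R s‖ * (Real.exp (-(lam * s)) * ‖Φ s‖) := by
          rw [hee, one_mul]
  -- Gronwall
  refine ⟨M * Real.exp (K * ∫ s in Set.Ici (0:ℝ), ‖R s‖), fun t ht => ?_⟩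
  have huIcc2 : Set.uIcc (0:ℝ) t = Set.Icc 0 t := Set.uIcc_of_le ht
  have hqint : MeasureTheory.IntegrableOn
      (fun s => ‖R s‖ * (Real.exp (-(lam * s)) * ‖Φ s‖)) (Set.uIcc (0:ℝ) t) := by
    rw [huIcc2]
    exact (hqcont.mono Set.Icc_subset_Ici_self).integrableOn_compact isCompact_Icc
  have hrint2 : MeasureTheory.IntegrableOn (fun s => ‖R s‖) (Set.uIcc (0:ℝ) t) := by
    rw [huIcc2]
    exact (hrcont.mono Set.Icc_subset_Ici_self).integrableOn_compact isCompact_Icc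
  have hρcont : ContinuousOn (fun x => ∫ s in (0:ℝ)..x, ‖R s‖ * (Real.exp (-(lam * s)) * ‖Φ s‖)) (Set.Icc 0 t) := by
    have := intervalIntegral.continuousOn_primitive_interval hqint
    rwa [huIcc2] at this
  have hσcont : ContinuousOn (fun x => ∫ s in (0:ℝ)..x, ‖R s‖) (Set.Icc 0 t) := by
    have := intervalIntegral.continuousOn_primitive_interval hrint2
    rwa [huIcc2] at this
  have hWcont : ContinuousOn (fun x => (M + K * ∫ s in (0:ℝ)..x, ‖R s‖ * (Real.exp (-(lam * s)) * ‖Φ s‖)) * Real.exp (-(K * (∫ s in (0:ℝ)..x, ‖R s‖)))) (Set.Icc 0 t) :=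
    (continuousOn_const.add (hρcont.const_smul K)).mul
      (Real.continuous_exp.comp_continuousOn (hσcont.const_smul K).neg)
  have hW : ∀ x ∈ Set.Ioo (0:ℝ) t,
      HasDerivAt (fun x => (M + K * ∫ s in (0:ℝ)..x, ‖R s‖ * (Real.exp (-(lam * s)) * ‖Φ s‖)) * Real.exp (-(K * (∫ s in (0:ℝ)..x, ‖R s‖))))
        (K * (‖R x‖ * (Real.exp (-(lam * x)) * ‖Φ x‖)) *
            Real.exp (-(K * (∫ s in (0:ℝ)..x, ‖R s‖))) +
          (M + K * (∫ s in (0:ℝ)..x, ‖R s‖ * (Real.exp (-(lam * s)) * ‖Φ s‖))) *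
            (Real.exp (-(K * (∫ s in (0:ℝ)..x, ‖R s‖))) * -(K * ‖R x‖))) x := by
    intro x hx
    have hx0 : (0:ℝ) < x := hx.1
    have hmeasq : StronglyMeasurableAtFilter (fun s => ‖R s‖ * (Real.exp (-(lam * s)) * ‖Φ s‖)) (nhds x) MeasureTheory.volume :=
      ⟨Set.Ioi 0, Ioi_mem_nhds hx0,
        ((hqcont.mono Set.Ioi_subset_Ici_self).aestronglyMeasurable measurableSet_Ioi)⟩
    have hmeasr : StronglyMeasurableAtFilter (fun s => ‖R s‖) (nhds x)
        MeasureTheory.volume :=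
      ⟨Set.Ioi 0, Ioi_mem_nhds hx0,
        ((hrcont.mono Set.Ioi_subset_Ici_self).aestronglyMeasurable measurableSet_Ioi)⟩
    have hqi : IntervalIntegrable (fun s => ‖R s‖ * (Real.exp (-(lam * s)) * ‖Φ s‖)) MeasureTheory.volume 0 x :=
      ContinuousOn.intervalIntegrable
        (by rw [Set.uIcc_of_le hx0.le]; exact hqcont.mono Set.Icc_subset_Ici_self)
    have hri : IntervalIntegrable (fun s => ‖R s‖) MeasureTheory.volume 0 x :=
      ContinuousOn.intervalIntegrable
        (by rw [Set.uIcc_of_le hx0.le]; exact hrcont.mono Set.Icc_subset_Ici_self)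
    have hρ' : HasDerivAt (fun x => ∫ s in (0:ℝ)..x, ‖R s‖ * (Real.exp (-(lam * s)) * ‖Φ s‖))
        (‖R x‖ * (Real.exp (-(lam * x)) * ‖Φ x‖)) x :=
      intervalIntegral.integral_hasDerivAt_right hqi hmeasq
        ((hqcont x hx0.le).continuousAt (Ici_mem_nhds hx0))
    have hσ' : HasDerivAt (fun x => ∫ s in (0:ℝ)..x, ‖R s‖) ‖R x‖ x :=
      intervalIntegral.integral_hasDerivAt_right hri hmeasr
        ((hrcont x hx0.le).continuousAt (Ici_mem_nhds hx0))
    exact ((hρ'.const_mul K).const_add M).mul (((hσ'.const_mul K).neg).exp)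
  have hanti : AntitoneOn (fun x => (M + K * ∫ s in (0:ℝ)..x, ‖R s‖ * (Real.exp (-(lam * s)) * ‖Φ s‖)) * Real.exp (-(K * (∫ s in (0:ℝ)..x, ‖R s‖)))) (Set.Icc 0 t) := by
    refine antitoneOn_of_deriv_nonpos (convex_Icc 0 t) hWcont ?_ ?_
    · rw [interior_Icc]
      exact fun x hx => (hW x hx).differentiableAt.differentiableWithinAt
    · rw [interior_Icc]
      intro x hx
      rw [(hW x hx).deriv]
      have hψx := hψineq x hx.1.le
      have hrx : (0:ℝ) ≤ ‖R x‖ := norm_nonneg _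
      have hepos : (0:ℝ) < Real.exp (-(K * (∫ s in (0:ℝ)..x, ‖R s‖))) := Real.exp_pos _
      have hprod := mul_le_mul_of_nonneg_left hψx
        (mul_nonneg (mul_nonneg hK0 hrx) hepos.le)
      nlinarith [hprod]
  have hWt := hanti (Set.left_mem_Icc.2 ht) (Set.right_mem_Icc.2 ht) ht
  have hW0 : (fun x => (M + K * ∫ s in (0:ℝ)..x, ‖R s‖ * (Real.exp (-(lam * s)) * ‖Φ s‖)) * Real.exp (-(K * (∫ s in (0:ℝ)..x, ‖R s‖)))) 0 = M := by
    simp [intervalIntegral.integral_same]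
  rw [hW0] at hWt
  have hgron : M + K * (∫ s in (0:ℝ)..t, ‖R s‖ * (Real.exp (-(lam * s)) * ‖Φ s‖)) ≤
      M * Real.exp (K * (∫ s in (0:ℝ)..t, ‖R s‖)) := by
    have h2 := mul_le_mul_of_nonneg_right hWt (Real.exp_nonneg (K * (∫ s in (0:ℝ)..t, ‖R s‖)))
    rwa [mul_assoc, ← Real.exp_add, neg_add_cancel, Real.exp_zero, mul_one] at h2
  have hσle : (∫ s in (0:ℝ)..t, ‖R s‖) ≤ ∫ s in Set.Ici (0:ℝ), ‖R s‖ := by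
    rw [intervalIntegral.integral_of_le ht]
    exact MeasureTheory.setIntegral_mono_set hRint
      (MeasureTheory.ae_of_all _ fun s => norm_nonneg _)
      (HasSubset.Subset.eventuallyLE (Set.Ioc_subset_Icc_self.trans Set.Icc_subset_Ici_self))
  have hψt : Real.exp (-(lam * t)) * ‖Φ t‖ ≤
      M * Real.exp (K * ∫ s in Set.Ici (0:ℝ), ‖R s‖) := by
    refine le_trans (hψineq t ht) (le_trans hgron ?_)
    exact mul_le_mul_of_nonneg_left
      (Real.exp_le_exp.2 (mul_le_mul_of_nonneg_left hσle hK0)) hM0.le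
  have hid : ‖Φ t‖ = Real.exp (lam * t) * (Real.exp (-(lam * t)) * ‖Φ t‖) := by
    rw [← mul_assoc, ← Real.exp_add, add_neg_cancel, Real.exp_zero, one_mul]
  rw [hid, mul_comm (M * Real.exp (K * ∫ s in Set.Ici (0:ℝ), ‖R s‖)) (Real.exp (lam * t))]
  exact mul_le_mul_of_nonneg_left hψt (Real.exp_nonneg _)
end
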